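/- arXiv:1908.09905 — 5 statements merged into one kernel-verified Lean document; each statement's English description precedes it below -/
import Mathlib

section
/- There exists an absolute constant c > 0 such that for all integers k > s ≥ 3 and every sufficiently large integer n, f_{s,k}(n) ≥ (c · r_k(n)/n)^{2(s-2)} · n². -/
open Finset Pointwise

/-- The `k`-term arithmetic progression `{x, x+d, …, x+(k-1)d}` as a finite set. -/
def AP (k : ℕ) (x d : ℤ) : Finset ℤ := (Finset.range k).image (fun i : ℕ => x + (i : ℤ) * d)

/-- A set of integers is `k`-AP free if it contains no nontrivial `k`-term
arithmetic progression. -/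
def APFree (k : ℕ) (A : Set ℤ) : Prop :=
  ∀ x d : ℤ, d ≠ 0 → ¬ (↑(AP k x d) : Set ℤ) ⊆ A

/-- `fAP s A` is the number of nontrivial `s`-term arithmetic progressions contained
in the finite set `A`. -/
noncomputable def fAP (s : ℕ) (A : Finset ℤ) : ℕ :=
  Nat.card {P : Finset ℤ // P ⊆ A ∧ ∃ x d : ℤ, d ≠ 0 ∧ P = AP s x d}

/-- `fsk s k n` is the maximum number of nontrivial `s`-term arithmetic progressions
in a `k`-AP free set of `n` integers. -/
noncomputable def fsk (s k n : ℕ) : ℕ :=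
  sSup {m | ∃ A : Finset ℤ, A.card = n ∧ APFree k ↑A ∧ fAP s A = m}

/-- `rk k n` is the size of the largest `k`-AP free subset of `{1, …, n}`. -/
noncomputable def rk (k n : ℕ) : ℕ :=
  sSup {m | ∃ A : Finset ℤ, A ⊆ Finset.Icc 1 (n : ℤ) ∧ APFree k ↑A ∧ A.card = m}

/-- The partial sumset `A +_G B` along the edge set `E` of a bipartite graph. -/
def partialSumset (E : Finset (ℤ × ℤ)) : Finset ℤ := E.image (fun e => e.1 + e.2)

/-- `pathCount A B E a a'` is the number of (ordered) paths `(a, b, a'', b', a')` of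
length four between `a` and `a'` in the bipartite graph with parts `A`, `B` and
edge set `E`. -/
def pathCount (A B : Finset ℤ) (E : Finset (ℤ × ℤ)) (a a' : ℤ) : ℕ :=
  ((B ×ˢ A ×ˢ B).filter (fun t =>
    (a, t.1) ∈ E ∧ (t.2.1, t.1) ∈ E ∧ (t.2.1, t.2.2) ∈ E ∧ (a', t.2.2) ∈ E)).card

/-!
Let `B ⊆ [0, W)`, with `W ≈ n / 2s²`, be a translate of the densest window of an extremal
`k`-AP-free subset of `[1, n]`, so that `#B ≥ r_k(n) W / 2n`. For a pair `x, x + d ∈ B` and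
`2 ≤ j < s`, the term `x + j d` lies in the translate `τ + Bs` of a spread union `Bs` of `s - 1`
copies of `B` for a proportion `#Bs / 4(s-1)W = #B / 4W` of the shifts `τ`; averaging over the
shifts one term at a time fixes `τ_2, …, τ_{s-1}` that capture a proportion `(#B / 4W)^(s-2)` of
all pairs. The rungs `B, B, τ_2 + Bs, …, τ_{s-1} + Bs` of a ladder whose spacing exceeds twice
their width form a `k`-AP-free set (a progression climbing it meets at most `s < k` rungs) of size
`≤ s² #B`, in which each captured pair `(x, d)` gives an `s`-AP. About `n / s² #B` copies of the
ladder at geometrically growing positions, padded by far-away points, form a `k`-AP-free set of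
`n` integers with at least `c^s n² (r_k(n) / n)^(s-1)` progressions of length `s`, and
`s - 1 ≤ 2(s - 2)`.
-/

lemma mem_AP {k : ℕ} {x d y : ℤ} : y ∈ AP k x d ↔ ∃ i < k, x + i * d = y := by
  simp [AP]

lemma coe_AP_subset_iff {k : ℕ} {x d : ℤ} {A : Set ℤ} :
    (AP k x d : Set ℤ) ⊆ A ↔ ∀ i < k, x + i * d ∈ A := by
  simp [Set.subset_def, mem_AP]

lemma vadd_AP (c : ℤ) (k : ℕ) (x d : ℤ) : c +ᵥ AP k x d = AP k (c + x) d := by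
  ext y
  simp only [mem_vadd_finset, mem_AP, vadd_eq_add]
  constructor
  · rintro ⟨_, ⟨i, hi, rfl⟩, rfl⟩
    exact ⟨i, hi, by ring⟩
  · rintro ⟨i, hi, rfl⟩
    exact ⟨_, ⟨i, hi, rfl⟩, by ring⟩

lemma AP_neg (k : ℕ) (x d : ℤ) : AP k x (-d) = AP k (x - (k - 1) * d) d := by
  ext y
  simp only [mem_AP]
  constructor
  all_goals
    rintro ⟨i, hi, rfl⟩
    have : ((k - 1 - i : ℕ) : ℤ) = k - 1 - i := by omega
    exact ⟨k - 1 - i, by omega, by rw [this]; ring⟩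

lemma le_of_mem_AP {k : ℕ} {x d y : ℤ} (hd : 0 ≤ d) (hy : y ∈ AP k x d) : x ≤ y := by
  obtain ⟨i, -, rfl⟩ := mem_AP.1 hy
  have : 0 ≤ (i : ℤ) * d := by positivity
  linarith

lemma AP_injective {s : ℕ} (hs : 2 ≤ s) {x d x' d' : ℤ} (hd : 0 < d) (hd' : 0 < d')
    (h : AP s x d = AP s x' d') : x = x' ∧ d = d' := by
  have mem_start : ∀ {x d}, x ∈ AP s x d := fun {x d} => mem_AP.2 ⟨0, by omega, by simp⟩
  have mem_second : ∀ {x d}, x + d ∈ AP s x d := fun {x d} => mem_AP.2 ⟨1, by omega, by simp⟩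
  have hx : x = x' := le_antisymm (le_of_mem_AP hd.le (by rw [h]; exact mem_start))
    (le_of_mem_AP hd'.le (by rw [← h]; exact mem_start))
  subst hx
  -- the second term of each progression is a later term of the other
  have step_le : ∀ {d d'}, 0 < d → 0 < d' → AP s x d = AP s x d' → d' ≤ d := by
    intro d d' hd hd' h
    obtain ⟨i, -, hi⟩ := mem_AP.1 (h ▸ mem_second : x + d ∈ AP s x d')
    rcases i with _ | i
    · simp at hi; omega
    · push_cast at hi; nlinarith
  exact ⟨rfl, le_antisymm (step_le hd' hd h.symm) (step_le hd hd' h)⟩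

lemma apFree_of_pos {k : ℕ} {A : Set ℤ}
    (h : ∀ x d : ℤ, 0 < d → ¬ ∀ i < k, x + i * d ∈ A) : APFree k A := by
  intro x d hd hsub
  rcases hd.lt_or_gt with hneg | hpos
  · rw [← neg_neg d, AP_neg, coe_AP_subset_iff] at hsub
    exact h _ _ (by omega) hsub
  · exact h x d hpos (coe_AP_subset_iff.1 hsub)

lemma APFree.mono {k : ℕ} {A B : Set ℤ} (h : APFree k B) (hAB : A ⊆ B) : APFree k A :=
  fun x d hd hsub => h x d hd (hsub.trans hAB)

lemma APFree.vadd {k : ℕ} {A : Set ℤ} (h : APFree k A) (c : ℤ) : APFree k (c +ᵥ A) := by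
  intro x d hd hsub
  refine h (-c + x) d hd ?_
  rw [← Set.vadd_set_subset_vadd_set_iff (a := c), ← Finset.coe_vadd_finset, vadd_AP]
  simpa using hsub

lemma apFree_empty {k : ℕ} (hk : 1 ≤ k) : APFree k (∅ : Finset ℤ) := fun x d _ hsub => by
  simpa using hsub (mem_AP.2 ⟨0, hk, by simp⟩ : x ∈ AP k x d)

lemma apFree_singleton {k : ℕ} (hk : 2 ≤ k) (a : ℤ) : APFree k {a} := by
  intro x d hd hsub
  rw [coe_AP_subset_iff] at hsub
  have h0 := hsub 0 (by omega)
  have h1 := hsub 1 (by omega)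
  simp only [Set.mem_singleton_iff] at h0 h1
  push_cast at h0 h1
  omega

open scoped Classical in
lemma fAP_eq_card (s : ℕ) (A : Finset ℤ) :
    fAP s A = #{P ∈ A.powerset | ∃ x d : ℤ, d ≠ 0 ∧ P = AP s x d} := by
  rw [fAP, ← Nat.card_eq_finsetCard]
  exact Nat.card_congr (Equiv.subtypeEquivRight fun P => by simp)

lemma exists_finset_card_eq_fAP (s : ℕ) (A : Finset ℤ) :
    ∃ F : Finset (Finset ℤ), #F = fAP s A ∧ ∀ P ∈ F, P ⊆ A ∧ ∃ x d : ℤ, d ≠ 0 ∧ P = AP s x d := by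
  classical
  exact ⟨_, (fAP_eq_card s A).symm, fun P hP => by simpa using hP⟩

lemma card_le_fAP {s : ℕ} {A : Finset ℤ} (F : Finset (Finset ℤ))
    (hF : ∀ P ∈ F, P ⊆ A ∧ ∃ x d : ℤ, d ≠ 0 ∧ P = AP s x d) : #F ≤ fAP s A := by
  classical
  rw [fAP_eq_card]
  exact card_le_card fun P hP => by simpa using hF P hP

lemma fAP_le_two_pow (s : ℕ) (A : Finset ℤ) : fAP s A ≤ 2 ^ #A := by
  classical
  rw [fAP_eq_card, ← card_powerset]
  exact card_filter_le _ _

lemma fAP_empty {s : ℕ} (hs : 0 < s) : fAP s ∅ = 0 := by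
  obtain ⟨F, hF, hFA⟩ := exists_finset_card_eq_fAP s ∅
  rw [← hF, card_eq_zero, eq_empty_iff_forall_notMem]
  intro P hP
  obtain ⟨hP, x, d, -, rfl⟩ := hFA P hP
  exact notMem_empty x (hP (mem_AP.2 ⟨0, hs, by simp⟩))

lemma fAP_mono (s : ℕ) {A B : Finset ℤ} (hAB : A ⊆ B) : fAP s A ≤ fAP s B := by
  obtain ⟨F, hF, hFA⟩ := exists_finset_card_eq_fAP s A
  exact hF ▸ card_le_fAP F fun P hP => ⟨(hFA P hP).1.trans hAB, (hFA P hP).2⟩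

lemma fAP_le_fAP_vadd (s : ℕ) (A : Finset ℤ) (c : ℤ) : fAP s A ≤ fAP s (c +ᵥ A) := by
  obtain ⟨F, hF, hFA⟩ := exists_finset_card_eq_fAP s A
  rw [← hF, ← card_image_of_injective F (AddAction.injective c)]
  refine card_le_fAP _ fun Q hQ => ?_
  obtain ⟨P, hP, rfl⟩ := mem_image.1 hQ
  obtain ⟨hPA, x, d, hd, rfl⟩ := hFA P hP
  exact ⟨vadd_finset_subset_vadd_finset hPA, c + x, d, hd, vadd_AP c s x d⟩

lemma fAP_vadd (s : ℕ) (A : Finset ℤ) (c : ℤ) : fAP s (c +ᵥ A) = fAP s A := by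
  refine le_antisymm ?_ (fAP_le_fAP_vadd s A c)
  simpa using fAP_le_fAP_vadd s (c +ᵥ A) (-c)

lemma fAP_add_fAP_le_fAP_union {s : ℕ} (hs : 0 < s) {A B : Finset ℤ} (hAB : Disjoint A B) :
    fAP s A + fAP s B ≤ fAP s (A ∪ B) := by
  obtain ⟨F, hF, hFA⟩ := exists_finset_card_eq_fAP s A
  obtain ⟨G, hG, hGB⟩ := exists_finset_card_eq_fAP s B
  have hFG : Disjoint F G := by
    rw [disjoint_left]
    intro P hPF hPG
    obtain ⟨hPA, x, d, -, rfl⟩ := hFA P hPF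
    have hx : x ∈ AP s x d := mem_AP.2 ⟨0, hs, by simp⟩
    exact disjoint_left.1 hAB (hPA hx) ((hGB _ hPG).1 hx)
  rw [← hF, ← hG, ← card_union_of_disjoint hFG]
  refine card_le_fAP _ fun P hP => ?_
  rcases mem_union.1 hP with hP | hP
  · exact ⟨(hFA P hP).1.trans subset_union_left, (hFA P hP).2⟩
  · exact ⟨(hGB P hP).1.trans subset_union_right, (hGB P hP).2⟩

lemma fAP_le_fsk {s k : ℕ} {A : Finset ℤ} (hfree : APFree k A) : fAP s A ≤ fsk s k #A :=
  le_csSup ⟨2 ^ #A, by rintro _ ⟨B, hB, -, rfl⟩; exact hB ▸ fAP_le_two_pow s B⟩ ⟨A, rfl, hfree, rfl⟩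

lemma exists_rk_witness {k : ℕ} (hk : 1 ≤ k) (n : ℕ) :
    ∃ B ⊆ Icc 1 (n : ℤ), APFree k B ∧ #B = rk k n := by
  set S := {m | ∃ B : Finset ℤ, B ⊆ Icc 1 (n : ℤ) ∧ APFree k ↑B ∧ #B = m}
  have hbdd : BddAbove S := by
    refine ⟨n, ?_⟩
    rintro _ ⟨B, hB, -, rfl⟩
    simpa using card_le_card hB
  exact Nat.sSup_mem (s := S) ⟨0, ∅, empty_subset _, apFree_empty hk, rfl⟩ hbdd

lemma rk_le {k : ℕ} (hk : 1 ≤ k) (n : ℕ) : rk k n ≤ n := by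
  obtain ⟨B, hB, -, hcard⟩ := exists_rk_witness hk n
  simpa [hcard] using card_le_card hB

lemma Int.eq_zero_of_abs_mul_lt {z S : ℤ} (h : |z * S| < S) : z = 0 := by
  have hS : S ≠ 0 := by rintro rfl; simp at h
  simpa [hS] using Int.eq_zero_of_abs_lt_dvd (dvd_mul_left S z) h

lemma mem_biUnion_vadd_mul {t : ℕ} {L : ℕ → Finset ℤ} {S y : ℤ} :
    y ∈ (range t).biUnion (fun j => (j * S) +ᵥ L j) ↔ ∃ j < t, ∃ u ∈ L j, j * S + u = y := by
  simp [mem_vadd_finset]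

section SpacedBlocks

variable {t : ℕ} {L : ℕ → Finset ℤ} {a w S : ℤ}

lemma card_biUnion_vadd_mul (hL : ∀ j < t, L j ⊆ Ico a (a + w)) (hS : w ≤ S) :
    #((range t).biUnion fun j => (j * S) +ᵥ L j) = ∑ j ∈ range t, #(L j) := by
  rw [card_biUnion]
  · exact sum_congr rfl fun j _ => card_vadd_finset _ _
  intro j hj j' hj' hne
  simp only [coe_range, Set.mem_Iio] at hj hj'
  refine disjoint_left.2 fun y hy hy' => hne ?_
  obtain ⟨u, hu, rfl⟩ := mem_vadd_finset.1 hy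
  obtain ⟨u', hu', he⟩ := mem_vadd_finset.1 hy'
  have hu := mem_Ico.1 (hL j hj hu)
  have hu' := mem_Ico.1 (hL j' hj' hu')
  simp only [vadd_eq_add] at he
  have : |((j' : ℤ) - j) * S| < S := by rw [abs_lt]; constructor <;> linarith
  exact_mod_cast (sub_eq_zero.1 (Int.eq_zero_of_abs_mul_lt this)).symm

/-- The block index of consecutive terms of a progression changes by the nearest integer to
`d / S`, which is unique because the blocks are narrow. -/
lemma eq_of_abs_sub_mul_lt {d q q' : ℤ} (hS : 2 * w ≤ S) (h : |d - q * S| < w)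
    (h' : |d - q' * S| < w) : q = q' := by
  have : |(q - q') * S| < S := by
    rw [abs_lt] at h h' ⊢; constructor <;> nlinarith
  exact sub_eq_zero.1 (Int.eq_zero_of_abs_mul_lt this)

lemma APFree.biUnion_vadd_mul {k : ℕ} (htk : t < k) (hL : ∀ j < t, L j ⊆ Ico a (a + w))
    (hS : 2 * w ≤ S) (hfree : ∀ j < t, APFree k (L j)) :
    APFree k ((range t).biUnion fun j => (j * S) +ᵥ L j : Finset ℤ) := by
  intro x d hd hsub
  rw [coe_AP_subset_iff] at hsub
  choose! c hc u hu hxu using fun i hi => mem_biUnion_vadd_mul.1 (hsub i hi)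
  have hbound : ∀ i < k, a ≤ u i ∧ u i < a + w := fun i hi => mem_Ico.1 (hL _ (hc i hi) (hu i hi))
  have hk : 1 < k := by have := hc 0 (by omega); omega
  set q : ℤ := (c 1 : ℤ) - c 0
  have hnear : ∀ i, i + 1 < k → |d - ((c (i + 1) : ℤ) - c i) * S| < w := by
    intro i hi
    have e₀ := hxu i (by omega)
    have e₁ := hxu (i + 1) hi
    have b₀ := hbound i (by omega)
    have b₁ := hbound (i + 1) hi
    push_cast at e₁
    rw [abs_lt]; constructor <;> nlinarith
  have hstep : ∀ i, i + 1 < k → (c (i + 1) : ℤ) - c i = q := fun i hi =>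
    eq_of_abs_sub_mul_lt hS (hnear i hi) (hnear 0 hk)
  have hlin : ∀ i < k, (c i : ℤ) = c 0 + i * q := by
    intro i
    induction i with
    | zero => simp
    | succ i ih => intro hi; push_cast; linarith [ih (by omega), hstep i hi]
  by_cases hq : q = 0
  · -- all terms lie in the block `c 0`
    have hc0 : ∀ i < k, c i = c 0 := fun i hi => by have := hlin i hi; rw [hq] at this; omega
    refine hfree (c 0) (hc 0 (by omega)) (x - c 0 * S) d hd (coe_AP_subset_iff.2 fun i hi => ?_)
    have hxi := hxu i hi
    have hui := hu i hi
    rw [hc0 i hi] at hxi hui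
    rwa [show x - c 0 * S + i * d = u i by linarith]
  · -- otherwise the block indices form a nonconstant `k`-term progression in `[0, t)`, `t < k`
    have hlast := hlin (k - 1) (by omega)
    have hc₀ := hc 0 (by omega)
    have hc₁ := hc (k - 1) (by omega)
    have hk' : ((k - 1 : ℕ) : ℤ) = k - 1 := by omega
    rw [hk'] at hlast
    rcases lt_or_gt_of_ne hq with hq | hq <;> nlinarith

end SpacedBlocks

lemma APFree.union_vadd {k : ℕ} (hk : 3 ≤ k) {X Y : Finset ℤ} {a b w : ℤ} (hX : APFree k X)
    (hY : APFree k Y) (hXa : X ⊆ Ico 0 a) (hYw : Y ⊆ Ico 0 w) (hab : 2 * a ≤ b)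
    (hawb : a + w ≤ b) : APFree k (X ∪ (b +ᵥ Y) : Finset ℤ) := by
  refine apFree_of_pos fun x d hd hall => ?_
  have hterm : ∀ i < k, (x + i * d ∈ X ∧ 0 ≤ x + i * d ∧ x + i * d < a) ∨
      (x + i * d - b ∈ Y ∧ b ≤ x + i * d ∧ x + i * d < b + w) := by
    intro i hi
    rcases mem_union.1 (hall i hi) with h | h
    · exact Or.inl ⟨h, by simpa using hXa h⟩
    · obtain ⟨y, hy, hye⟩ := mem_vadd_finset.1 h
      simp only [vadd_eq_add] at hye
      have := mem_Ico.1 (hYw hy)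
      exact Or.inr ⟨by rwa [← hye, add_sub_cancel_left], by omega, by omega⟩
  have h₀ := hterm 0 (by omega)
  have h₁ := hterm 1 (by omega)
  have h₂ := hterm 2 (by omega)
  simp only [Nat.cast_zero, Nat.cast_one, Nat.cast_ofNat, zero_mul, one_mul, add_zero] at h₀ h₁ h₂
  rcases h₀ with ⟨hx, hx0, hxa⟩ | ⟨hx, hbx, -⟩
  · rcases h₁ with ⟨-, -, hx1⟩ | ⟨-, hbx1, -⟩
    · -- the step is shorter than the gap between the blocks: the progression stays in `X`
      have hinX : ∀ i < k, x + i * d ∈ X := by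
        intro i
        induction i with
        | zero => simpa using fun _ => hx
        | succ i ih =>
          intro hi
          have hlt := (mem_Ico.1 (hXa (ih (by omega)))).2
          rcases hterm (i + 1) hi with ⟨h, -⟩ | ⟨-, hge, -⟩
          · exact h
          · push_cast at hge; linarith
      exact hX x d hd.ne' (coe_AP_subset_iff.2 hinX)
    · -- the step jumps the gap, so the third term overshoots `Y`
      rcases h₂ with ⟨-, -, h2⟩ | ⟨-, -, h2⟩ <;> linarith
  · -- the progression starts in the far block `b +ᵥ Y`, so it stays there
    refine hY (x - b) d hd.ne' (coe_AP_subset_iff.2 fun i hi => ?_)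
    rcases hterm i hi with ⟨-, h0, ha⟩ | ⟨hY', -⟩
    · have : 0 ≤ (i : ℤ) * d := by positivity
      linarith
    · rwa [sub_add_eq_add_sub]

lemma exists_vadd_subset_Ico (X : Finset ℤ) : ∃ c : ℤ, ∃ w : ℕ, c +ᵥ X ⊆ Ico 0 (w : ℤ) := by
  obtain ⟨lo, hlo⟩ := X.bddBelow
  obtain ⟨hi, hhi⟩ := X.bddAbove
  refine ⟨-lo, (hi - lo + 1).toNat, fun y hy => ?_⟩
  obtain ⟨z, hz, rfl⟩ := mem_vadd_finset.1 hy
  have := hlo hz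
  have := hhi hz
  simp only [vadd_eq_add, mem_Ico]
  omega

/-- Copies of `X` placed at the positions `2 w 4 ^ i` are so far apart that a progression with
three terms cannot meet two of them. -/
lemma exists_apFree_copies {k : ℕ} (s : ℕ) (hk : 3 ≤ k) (hs : 0 < s) {X : Finset ℤ} {w : ℕ}
    (hXw : X ⊆ Ico 0 (w : ℤ)) (hX : APFree k X) (m : ℕ) :
    ∃ A ⊆ Ico 0 ((w : ℤ) * 4 ^ m), APFree k A ∧ #A = m * #X ∧ m * fAP s X ≤ fAP s A := by
  induction m with
  | zero => exact ⟨∅, empty_subset _, apFree_empty (by omega), by simp, by simp⟩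
  | succ m ih =>
    obtain ⟨A, hA, hAfree, hAcard, hAap⟩ := ih
    set b : ℤ := 2 * w * 4 ^ m with hb
    have hw : (w : ℤ) ≤ w * 4 ^ m :=
      le_mul_of_one_le_right (by positivity) (one_le_pow₀ (by norm_num))
    have hdisj : Disjoint A (b +ᵥ X) := by
      refine disjoint_left.2 fun y hyA hyX => ?_
      obtain ⟨z, hz, rfl⟩ := mem_vadd_finset.1 hyX
      have := mem_Ico.1 (hA hyA)
      have := mem_Ico.1 (hXw hz)
      simp only [vadd_eq_add] at *
      linarith
    refine ⟨A ∪ (b +ᵥ X), fun y hy => ?_,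
      hAfree.union_vadd hk hX hA hXw (le_of_eq (by rw [hb]; ring)) (by linarith), ?_, ?_⟩
    · rw [pow_succ]
      rcases mem_union.1 hy with hy | hy
      · have := mem_Ico.1 (hA hy)
        have : (0 : ℤ) ≤ w * 4 ^ m := by positivity
        rw [mem_Ico]; constructor <;> linarith
      · obtain ⟨z, hz, rfl⟩ := mem_vadd_finset.1 hy
        have := mem_Ico.1 (hXw hz)
        rw [mem_Ico, vadd_eq_add]; constructor <;> linarith
    · rw [card_union_of_disjoint hdisj, card_vadd_finset, hAcard]; ring
    · calc (m + 1) * fAP s X = m * fAP s X + fAP s (b +ᵥ X) := by rw [fAP_vadd]; ring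
        _ ≤ fAP s A + fAP s (b +ᵥ X) := by gcongr
        _ ≤ fAP s (A ∪ (b +ᵥ X)) := fAP_add_fAP_le_fAP_union hs hdisj

lemma fAP_le_fsk_of_card_le {s k n : ℕ} (hk : 3 ≤ k) {A : Finset ℤ} {a : ℕ}
    (hA : A ⊆ Ico 0 (a : ℤ)) (hfree : APFree k A) (hn : #A ≤ n) : fAP s A ≤ fsk s k n := by
  obtain ⟨j, rfl⟩ := Nat.exists_eq_add_of_le hn
  induction j generalizing A a with
  | zero => exact fAP_le_fsk hfree
  | succ j ih =>
    set A' := A ∪ ((2 * a + 1 : ℤ) +ᵥ ({0} : Finset ℤ))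
    have hA' : A' ⊆ Ico 0 ((2 * a + 2 : ℕ) : ℤ) := by
      intro y hy
      rcases mem_union.1 hy with hy | hy
      · have := mem_Ico.1 (hA hy)
        rw [mem_Ico]; push_cast; constructor <;> linarith
      · simp only [vadd_finset_singleton, vadd_eq_add, add_zero, mem_singleton] at hy
        rw [hy, mem_Ico]; push_cast; constructor <;> linarith
    have hfree' : APFree k A' :=
      hfree.union_vadd hk (by simpa using apFree_singleton (by omega) 0) hA
        (by simp : ({0} : Finset ℤ) ⊆ Ico 0 1) (by linarith) (by linarith)
    have hcard : #A' = #A + 1 := by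
      rw [card_union_of_disjoint]
      · simp
      · simp only [vadd_finset_singleton, vadd_eq_add, add_zero, disjoint_singleton_right]
        intro h
        have := mem_Ico.1 (hA h)
        linarith
    calc fAP s A ≤ fAP s A' := fAP_mono s subset_union_left
      _ ≤ fsk s k (#A' + j) := ih hA' hfree' (by omega)
      _ = fsk s k (#A + (j + 1)) := by rw [hcard]; congr 1; omega

lemma mul_fAP_le_fsk {s k n m : ℕ} (hk : 3 ≤ k) (hs : 0 < s) {X : Finset ℤ} (hX : APFree k X)
    (hn : m * #X ≤ n) : m * fAP s X ≤ fsk s k n := by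
  obtain ⟨c, w, hXw⟩ := exists_vadd_subset_Ico X
  obtain ⟨A, hA, hAfree, hAcard, hAap⟩ :=
    exists_apFree_copies s hk hs hXw (by simpa using hX.vadd c) m
  rw [card_vadd_finset, fAP_vadd] at *
  refine hAap.trans (fAP_le_fsk_of_card_le hk (a := w * 4 ^ m) (by simpa using hA) hAfree ?_)
  omega

lemma mul_fAP_le_two_mul_card_mul_fsk {s k n : ℕ} (hk : 3 ≤ k) (hs : 0 < s) {X : Finset ℤ}
    (hX : APFree k X) (hXn : #X ≤ n) : n * fAP s X ≤ 2 * #X * fsk s k n := by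
  rcases X.eq_empty_or_nonempty with rfl | hne
  · simp [fAP_empty hs]
  have hpos := hne.card_pos
  have hcopies := mul_fAP_le_fsk (m := n / #X) (s := s) hk hs hX (Nat.div_mul_le_self n #X)
  have hn : n ≤ 2 * (n / #X) * #X := by
    have := Nat.lt_div_mul_add (a := n) hpos
    have := Nat.div_pos hXn hpos
    nlinarith
  calc n * fAP s X ≤ 2 * (n / #X) * #X * fAP s X := by gcongr
    _ = 2 * #X * (n / #X * fAP s X) := by ring
    _ ≤ 2 * #X * fsk s k n := by gcongr

lemma exists_translate_capture {α : Type*} (Q : Finset α) (f : α → ℤ) {S T : Finset ℤ}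
    (hT : T.Nonempty) (hf : ∀ p ∈ Q, ∀ b ∈ S, f p - b ∈ T) :
    ∃ τ ∈ T, #Q * #S ≤ #{p ∈ Q | f p - τ ∈ S} * #T := by
  have hdouble : ∑ τ ∈ T, #{p ∈ Q | f p - τ ∈ S} = ∑ p ∈ Q, #{τ ∈ T | f p - τ ∈ S} := by
    simp_rw [card_filter]
    exact sum_comm
  have hfiber : ∀ p ∈ Q, #S ≤ #{τ ∈ T | f p - τ ∈ S} := fun p hp =>
    card_le_card_of_injOn (f p - ·) (fun b hb => by simpa using ⟨hf p hp b hb, hb⟩)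
      fun b _ b' _ h => by simpa using h
  refine exists_le_of_sum_le hT ?_
  calc ∑ _τ ∈ T, #Q * #S = (∑ _p ∈ Q, #S) * #T := by simp [mul_comm]
    _ ≤ (∑ p ∈ Q, #{τ ∈ T | f p - τ ∈ S}) * #T := Nat.mul_le_mul_right _ (sum_le_sum hfiber)
    _ = ∑ τ ∈ T, #{p ∈ Q | f p - τ ∈ S} * #T := by rw [← hdouble, sum_mul]

lemma exists_common_translate_capture {α ι : Type*} [DecidableEq ι] (Q₀ : Finset α)
    (f : ι → α → ℤ) {S T : Finset ℤ} (hT : T.Nonempty) (J : Finset ι)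
    (hf : ∀ j ∈ J, ∀ p ∈ Q₀, ∀ b ∈ S, f j p - b ∈ T) :
    ∃ τ : ι → ℤ, (∀ j ∈ J, τ j ∈ T) ∧ ∃ Q ⊆ Q₀,
      (∀ p ∈ Q, ∀ j ∈ J, f j p - τ j ∈ S) ∧ #Q₀ * #S ^ #J ≤ #Q * #T ^ #J := by
  induction J using Finset.induction_on with
  | empty => exact ⟨0, by simp, Q₀, subset_rfl, by simp, by simp⟩
  | insert j J hj ih =>
    obtain ⟨τ, hτT, Q, hQ, hQS, hcard⟩ := ih fun j' hj' => hf j' (mem_insert_of_mem hj')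
    obtain ⟨τj, hτj, hcap⟩ := exists_translate_capture Q (f j) hT
      fun p hp b hb => hf j (mem_insert_self j J) p (hQ hp) b hb
    have hupdate : ∀ j' ∈ J, Function.update τ j τj j' = τ j' := fun j' hj' =>
      Function.update_of_ne (ne_of_mem_of_not_mem hj' hj) _ _
    refine ⟨Function.update τ j τj, ?_, {p ∈ Q | f j p - τj ∈ S}, (filter_subset _ _).trans hQ,
      ?_, ?_⟩
    · intro j' hj'
      rcases mem_insert.1 hj' with rfl | hj'
      · simpa using hτj
      · rw [hupdate j' hj']; exact hτT j' hj'
    · intro p hp j' hj'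
      rw [mem_filter] at hp
      rcases mem_insert.1 hj' with rfl | hj'
      · simpa using hp.2
      · rw [hupdate j' hj']; exact hQS p hp.1 j' hj'
    · rw [card_insert_of_notMem hj, pow_succ, pow_succ]
      calc #Q₀ * (#S ^ #J * #S) = #Q₀ * #S ^ #J * #S := by ring
        _ ≤ #Q * #T ^ #J * #S := by gcongr
        _ = #Q * #S * #T ^ #J := by ring
        _ ≤ #{p ∈ Q | f j p - τj ∈ S} * #T * #T ^ #J := by gcongr
        _ = _ := by ring

lemma exists_apFree_subset_Ico {k n W : ℕ} (hk : 1 ≤ k) (hW : 0 < W) (hWn : W ≤ n) :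
    ∃ B ⊆ Ico 0 (W : ℤ), APFree k B ∧ rk k n * W ≤ 2 * n * #B := by
  obtain ⟨B₀, hB₀, hfree, hcard⟩ := exists_rk_witness hk n
  obtain ⟨τ, -, hτ⟩ := exists_translate_capture B₀ id (S := Ico 0 (W : ℤ))
    (T := Ioc (-(W : ℤ)) n) ⟨0, by simpa using hW⟩ fun y hy b hb => by
      have := mem_Icc.1 (hB₀ hy)
      have := mem_Ico.1 hb
      simp only [id, mem_Ioc]
      constructor <;> linarith
  set B₁ := {y ∈ B₀ | y - τ ∈ Ico 0 (W : ℤ)}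
  refine ⟨-τ +ᵥ B₁, fun y hy => ?_, ?_, ?_⟩
  · obtain ⟨z, hz, rfl⟩ := mem_vadd_finset.1 hy
    simpa [neg_add_eq_sub] using (mem_filter.1 hz).2
  · rw [coe_vadd_finset]
    exact (hfree.mono (coe_subset.2 (filter_subset _ _))).vadd _
  · have hT : (n - -(W : ℤ)).toNat = n + W := by omega
    simp only [Int.card_Ico, Int.card_Ioc, sub_zero, Int.toNat_natCast, id, hT, hcard] at hτ
    rw [card_vadd_finset]
    nlinarith

lemma exists_apFree_spread_copies {k t W : ℕ} (htk : t < k) {B : Finset ℤ}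
    (hB : B ⊆ Ico 0 (W : ℤ)) (hfree : APFree k B) :
    ∃ Bs ⊆ Ico 0 (2 * t * W : ℤ), APFree k Bs ∧ #Bs = t * #B := by
  have hB' : ∀ j < t, B ⊆ Ico 0 (0 + W : ℤ) := fun _ _ => by simpa using hB
  refine ⟨(range t).biUnion fun j => (j * (2 * W : ℤ)) +ᵥ B, fun y hy => ?_,
    APFree.biUnion_vadd_mul htk hB' le_rfl fun _ _ => hfree, ?_⟩
  · obtain ⟨j, hj, u, hu, rfl⟩ := mem_biUnion_vadd_mul.1 hy
    have := mem_Ico.1 (hB hu)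
    have : (j : ℤ) + 1 ≤ t := by exact_mod_cast hj
    rw [mem_Ico]; constructor <;> nlinarith
  · rw [card_biUnion_vadd_mul hB' (by linarith), sum_const, card_range, smul_eq_mul]

lemma exists_apFree_ladder {k s : ℕ} (hs : 2 ≤ s) (hsk : s < k) {L : ℕ → Finset ℤ} {a w : ℤ}
    (hL : ∀ j < s, L j ⊆ Ico a (a + w)) (hfree : ∀ j < s, APFree k (L j))
    (Q : Finset (ℤ × ℤ)) (hQ : ∀ p ∈ Q, ∀ j < s, p.1 + j * p.2 ∈ L j) :
    ∃ X : Finset ℤ, APFree k X ∧ #X ≤ ∑ j ∈ range s, #(L j) ∧ #Q ≤ fAP s X := by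
  -- the `j`-th term `x + j (d + 2w)` of the progression lands in the `j`-th rung `j 2w +ᵥ L j`
  refine ⟨(range s).biUnion fun j => (j * (2 * w)) +ᵥ L j,
    APFree.biUnion_vadd_mul hsk hL le_rfl hfree, card_biUnion_le.trans_eq (by simp), ?_⟩
  have hpos : ∀ p ∈ Q, 0 < p.2 + 2 * w := fun p hp => by
    have h₀ := mem_Ico.1 (hL 0 (by omega) (hQ p hp 0 (by omega)))
    have h₁ := mem_Ico.1 (hL 1 (by omega) (hQ p hp 1 (by omega)))
    simp only [Nat.cast_zero, Nat.cast_one, zero_mul, one_mul, add_zero] at h₀ h₁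
    linarith
  have hinj : Set.InjOn (fun p : ℤ × ℤ => AP s p.1 (p.2 + 2 * w)) Q := fun p hp p' hp' h => by
    obtain ⟨h₁, h₂⟩ := AP_injective hs (hpos p hp) (hpos p' hp') h
    exact Prod.ext h₁ (by linarith)
  rw [← card_image_of_injOn hinj]
  refine card_le_fAP _ fun P hP => ?_
  obtain ⟨p, hp, rfl⟩ := mem_image.1 hP
  refine ⟨fun y hy => ?_, p.1, _, (hpos p hp).ne', rfl⟩
  obtain ⟨j, hj, rfl⟩ := mem_AP.1 hy
  exact mem_biUnion_vadd_mul.2 ⟨j, hj, _, hQ p hp j hj, by ring⟩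

lemma exists_captured_pairs {s W : ℕ} (hs : 2 ≤ s) (hW : 0 < W) {B Bs : Finset ℤ}
    (hB : B ⊆ Ico 0 (W : ℤ)) (hBs : Bs ⊆ Ico 0 (2 * (s - 1 : ℕ) * W : ℤ))
    (hBscard : #Bs = (s - 1) * #B) :
    ∃ τ : ℕ → ℤ, (∀ j ∈ Ico 2 s, τ j ∈ Ico (-(3 * ((s - 1) * W : ℕ) : ℤ)) ((s - 1) * W : ℕ)) ∧
      ∃ Q : Finset (ℤ × ℤ), (∀ p ∈ Q, p.1 ∈ B ∧ p.1 + p.2 ∈ B ∧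
        ∀ j ∈ Ico 2 s, p.1 + j * p.2 - τ j ∈ Bs) ∧ #B ^ s ≤ #Q * (4 * W) ^ (s - 2) := by
  set V : ℕ := (s - 1) * W with hV
  set Q₀ : Finset (ℤ × ℤ) := (B ×ˢ B).image fun p => (p.1, p.2 - p.1)
  set T : Finset ℤ := Ico (-(3 * V : ℤ)) V
  have hVpos : 0 < V := Nat.mul_pos (by omega) hW
  have hcompat : ∀ j ∈ Ico 2 s, ∀ p ∈ Q₀, ∀ b ∈ Bs, p.1 + j * p.2 - b ∈ T := by
    intro j hj p hp b hb
    obtain ⟨⟨x, y⟩, hxy, rfl⟩ := mem_image.1 hp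
    obtain ⟨hx, hy⟩ := mem_product.1 hxy
    have hx := mem_Ico.1 (hB hx)
    have hy := mem_Ico.1 (hB hy)
    have hb := mem_Ico.1 (hBs hb)
    have hj := mem_Ico.1 hj
    have hj₁ : (2 : ℤ) ≤ j := by exact_mod_cast hj.1
    have hj₂ : (j : ℤ) ≤ s - 1 := by omega
    have hVW : (V : ℤ) = (s - 1) * W := by
      push_cast [hV, Nat.cast_sub (show 1 ≤ s by omega)]; ring
    simp only [T, mem_Ico]
    constructor <;> nlinarith
  obtain ⟨τ, hτT, Q, hQ₀, hQBs, hcount⟩ := exists_common_translate_capture Q₀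
    (fun (j : ℕ) p => p.1 + j * p.2) (S := Bs) (T := T) ⟨0, by simp [T, hVpos]⟩ (Ico 2 s) hcompat
  refine ⟨τ, hτT, Q, fun p hp => ?_, ?_⟩
  · obtain ⟨⟨x, y⟩, hxy, rfl⟩ := mem_image.1 (hQ₀ hp)
    obtain ⟨hx, hy⟩ := mem_product.1 hxy
    exact ⟨hx, by simpa using hy, hQBs _ hp⟩
  · have hQ₀card : #Q₀ = #B ^ 2 := by
      refine (card_image_of_injective _ fun p q h => ?_).trans (by rw [card_product, sq])
      simp only [Prod.mk.injEq] at h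
      exact Prod.ext h.1 (by omega)
    have hTcard : #T = 4 * V := by simp only [T, Int.card_Ico]; omega
    rw [hQ₀card, hBscard, hTcard, Nat.card_Ico, hV] at hcount
    refine Nat.le_of_mul_le_mul_right ?_ (pow_pos (show 0 < s - 1 by omega) (s - 2))
    calc #B ^ s * (s - 1) ^ (s - 2) = #B ^ 2 * ((s - 1) * #B) ^ (s - 2) := by
          rw [mul_pow, ← pow_mul_pow_sub _ hs]; ring
      _ ≤ #Q * (4 * ((s - 1) * W)) ^ (s - 2) := hcount
      _ = #Q * (4 * W) ^ (s - 2) * (s - 1) ^ (s - 2) := by ring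

/-- Spreading `s - 1` copies of `B` over the whole range of the `j`-th terms keeps the density
`#B / W`, so capturing each term by a translate costs only an absolute factor. -/
lemma exists_apFree_many_APs {k s W : ℕ} (hs : 2 ≤ s) (hsk : s < k) (hW : 0 < W)
    {B : Finset ℤ} (hB : B ⊆ Ico 0 (W : ℤ)) (hfree : APFree k B) :
    ∃ X : Finset ℤ, APFree k X ∧ #X ≤ s ^ 2 * #B ∧ #B ^ s ≤ fAP s X * (4 * W) ^ (s - 2) := by
  obtain ⟨Bs, hBs, hBsfree, hBscard⟩ :=
    exists_apFree_spread_copies (t := s - 1) (by omega) hB hfree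
  obtain ⟨τ, hτ, Q, hQ, hcount⟩ := exists_captured_pairs hs hW hB hBs hBscard
  set V : ℤ := (((s - 1) * W : ℕ) : ℤ) with hV
  have hVW : V = (s - 1 : ℕ) * W := by rw [hV]; push_cast; ring
  set L : ℕ → Finset ℤ := fun j => if j < 2 then B else τ j +ᵥ Bs
  have hL : ∀ j < s, L j ⊆ Ico (-(3 * V)) (-(3 * V) + 6 * V) := by
    intro j _ y hy
    simp only [L] at hy
    split_ifs at hy with hj
    · have := mem_Ico.1 (hB hy)
      have : (W : ℤ) ≤ V := by rw [hV]; exact_mod_cast Nat.le_mul_of_pos_left W (by omega)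
      rw [mem_Ico]; constructor <;> linarith
    · obtain ⟨z, hz, rfl⟩ := mem_vadd_finset.1 hy
      have := mem_Ico.1 (hBs hz)
      have := mem_Ico.1 (hτ j (mem_Ico.2 ⟨by omega, by omega⟩))
      rw [mem_Ico, vadd_eq_add]; constructor <;> linarith
  have hLfree : ∀ j < s, APFree k (L j) := by
    intro j _
    simp only [L]
    split_ifs
    · exact hfree
    · rw [coe_vadd_finset]; exact hBsfree.vadd _
  have hQL : ∀ p ∈ Q, ∀ j < s, p.1 + j * p.2 ∈ L j := by
    intro p hp j hj
    obtain ⟨hp₀, hp₁, hpBs⟩ := hQ p hp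
    simp only [L]
    split_ifs with hj₂
    · interval_cases j <;> simpa
    · exact mem_vadd_finset.2 ⟨_, hpBs j (mem_Ico.2 ⟨by omega, hj⟩), by simp⟩
  obtain ⟨X, hXfree, hXcard, hXap⟩ := exists_apFree_ladder (by omega) hsk hL hLfree Q hQL
  have hLcard : ∀ j ∈ range s, #(L j) ≤ (s - 1) * #B := by
    intro j _
    simp only [L]
    split_ifs
    · exact Nat.le_mul_of_pos_left _ (by omega)
    · rw [card_vadd_finset, hBscard]
  refine ⟨X, hXfree, ?_, hcount.trans (by gcongr)⟩
  calc #X ≤ ∑ j ∈ range s, #(L j) := hXcard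
    _ ≤ s * ((s - 1) * #B) := by simpa using sum_le_sum hLcard
    _ ≤ s ^ 2 * #B := by rw [sq, mul_assoc]; gcongr; omega

lemma mul_pow_le_fsk_of_subset_Ico {k s n W : ℕ} (hs : 2 ≤ s) (hsk : s < k) (hW : 0 < W)
    (hWn : s ^ 2 * W ≤ n) {B : Finset ℤ} (hB : B ⊆ Ico 0 (W : ℤ)) (hfree : APFree k B) :
    n * #B ^ (s - 1) ≤ 2 * s ^ 2 * (4 * W) ^ (s - 2) * fsk s k n := by
  obtain ⟨X, hXfree, hXcard, hXap⟩ := exists_apFree_many_APs hs hsk hW hB hfree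
  have hBW : #B ≤ W := by simpa using card_le_card hB
  have hcopies := mul_fAP_le_two_mul_card_mul_fsk (s := s) (by omega) (by omega) hXfree
    (hXcard.trans ((Nat.mul_le_mul_left _ hBW).trans hWn))
  rcases Nat.eq_zero_or_pos #B with hB₀ | hBpos
  · simp [hB₀, show s - 1 ≠ 0 by omega]
  refine Nat.le_of_mul_le_mul_left ?_ hBpos
  calc #B * (n * #B ^ (s - 1)) = n * #B ^ s := by
        rw [mul_left_comm, ← pow_succ', Nat.sub_add_cancel (by omega)]
    _ ≤ n * fAP s X * (4 * W) ^ (s - 2) := by rw [mul_assoc]; gcongr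
    _ ≤ 2 * #X * fsk s k n * (4 * W) ^ (s - 2) := Nat.mul_le_mul_right _ hcopies
    _ ≤ 2 * (s ^ 2 * #B) * fsk s k n * (4 * W) ^ (s - 2) := by gcongr
    _ = #B * (2 * s ^ 2 * (4 * W) ^ (s - 2) * fsk s k n) := by ring

lemma sixteen_mul_pow_four_mul_eight_pow_le (e : ℕ) (he : 1 ≤ e) :
    16 * (e + 2) ^ 4 * 8 ^ e ≤ 1000 ^ (2 * e) := by
  have h3 : e + 2 ≤ 3 ^ e := by
    have := one_add_le_pow_of_two_add_nonneg (a := 2) (by norm_num) e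
    push_cast at this; omega
  calc 16 * (e + 2) ^ 4 * 8 ^ e ≤ 16 ^ e * (3 ^ e) ^ 4 * 8 ^ e := by
        gcongr
        calc 16 = 16 ^ 1 := by norm_num
          _ ≤ 16 ^ e := Nat.pow_le_pow_right (by norm_num) he
    _ = 10368 ^ e := by rw [← pow_mul, mul_comm e 4, pow_mul, ← mul_pow, ← mul_pow]; norm_num
    _ ≤ 1000000 ^ e := Nat.pow_le_pow_left (by norm_num) e
    _ = 1000 ^ (2 * e) := by rw [pow_mul]; norm_num

lemma pow_mul_sq_le_of_density {s n r W h F : ℕ} (hs : 3 ≤ s) (hW : 0 < W) (hrn : r ≤ n)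
    (hnW : n ≤ 4 * s ^ 2 * W) (hr : r * W ≤ 2 * n * h)
    (hF : n * h ^ (s - 1) ≤ 2 * s ^ 2 * (4 * W) ^ (s - 2) * F) :
    r ^ (2 * (s - 2)) * n ^ 2 ≤ 1000 ^ (2 * (s - 2)) * n ^ (2 * (s - 2)) * F := by
  obtain ⟨e, rfl⟩ : ∃ e, s = e + 2 := ⟨s - 2, by omega⟩
  simp only [show e + 2 - 1 = e + 1 by omega, Nat.add_sub_cancel] at hF ⊢
  have hWe : 0 < W ^ e := pow_pos hW e
  have step₁ : r ^ (e + 1) * W * n * W ^ e ≤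
      2 ^ (e + 2) * (e + 2) ^ 2 * 4 ^ e * n ^ (e + 1) * F * W ^ e :=
    calc r ^ (e + 1) * W * n * W ^ e = (r * W) ^ (e + 1) * n := by ring
      _ ≤ (2 * n * h) ^ (e + 1) * n := by gcongr
      _ = 2 ^ (e + 1) * n ^ (e + 1) * (n * h ^ (e + 1)) := by ring
      _ ≤ 2 ^ (e + 1) * n ^ (e + 1) * (2 * (e + 2) ^ 2 * (4 * W) ^ e * F) := by gcongr
      _ = _ := by ring
  replace step₁ := Nat.le_of_mul_le_mul_right step₁ hWe
  have step₂ : r ^ (e + 1) * n ^ 2 ≤ 16 * (e + 2) ^ 4 * 8 ^ e * n ^ (e + 1) * F :=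
    calc r ^ (e + 1) * n ^ 2 ≤ r ^ (e + 1) * n * (4 * (e + 2) ^ 2 * W) := by
          rw [sq, ← mul_assoc]; gcongr
      _ = 4 * (e + 2) ^ 2 * (r ^ (e + 1) * W * n) := by ring
      _ ≤ 4 * (e + 2) ^ 2 * (2 ^ (e + 2) * (e + 2) ^ 2 * 4 ^ e * n ^ (e + 1) * F) := by
          gcongr
      _ = 16 * (e + 2) ^ 4 * (2 ^ e * 4 ^ e) * n ^ (e + 1) * F := by ring
      _ = _ := by rw [← mul_pow]; norm_num
  calc r ^ (2 * e) * n ^ 2 = r ^ (e - 1) * (r ^ (e + 1) * n ^ 2) := by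
        rw [← mul_assoc, ← pow_add]; congr 2; omega
    _ ≤ n ^ (e - 1) * (16 * (e + 2) ^ 4 * 8 ^ e * n ^ (e + 1) * F) := by gcongr
    _ = 16 * (e + 2) ^ 4 * 8 ^ e * n ^ (e - 1 + (e + 1)) * F := by ring
    _ ≤ 1000 ^ (2 * e) * n ^ (2 * e) * F := by
        rw [show e - 1 + (e + 1) = 2 * e by omega]
        gcongr
        exact sixteen_mul_pow_four_mul_eight_pow_le e (by omega)

theorem fsk_lower_bound :
    ∃ c : ℝ, 0 < c ∧ ∀ k s : ℕ, 3 ≤ s → s < k →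
      ∃ n₀ : ℕ, ∀ n : ℕ, n₀ ≤ n →
        (c * (rk k n : ℝ) / n) ^ (2 * (s - 2)) * (n : ℝ) ^ 2 ≤ (fsk s k n : ℝ) := by
  refine ⟨1 / 1000, by norm_num, fun k s hs hsk => ⟨2 * s ^ 2, fun n hn => ?_⟩⟩
  set W := n / (2 * s ^ 2)
  have hW : 0 < W := Nat.div_pos hn (by positivity)
  have hWn : 2 * s ^ 2 * W ≤ n := Nat.mul_div_le n _
  have hnW : n ≤ 4 * s ^ 2 * W := by
    have : n < W * (2 * s ^ 2) + 2 * s ^ 2 := Nat.lt_div_mul_add (by positivity)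
    nlinarith [Nat.mul_le_mul_left (2 * s ^ 2) hW]
  obtain ⟨B, hB, hBfree, hdense⟩ := exists_apFree_subset_Ico (k := k) (by omega) hW
    ((Nat.le_mul_of_pos_left W (by positivity)).trans hWn)
  have hAPs := mul_pow_le_fsk_of_subset_Ico (by omega) hsk hW
    ((Nat.mul_le_mul_right W (by omega)).trans hWn) hB hBfree
  have key := pow_mul_sq_le_of_density hs hW (rk_le (by omega) n) hnW hdense hAPs
  have hn₀ : (0 : ℝ) < n := by exact_mod_cast (hW.trans_le (Nat.div_le_self _ _))
  rw [show (1 / 1000 * rk k n / n : ℝ) = rk k n / (1000 * n) by ring, div_pow,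
    div_mul_eq_mul_div, div_le_iff₀ (by positivity), mul_pow, mul_comm (fsk s k n : ℝ)]
  exact_mod_cast key
end

section
/- There is an absolute constant C > 0 with the following property (a variant of the Balog–Szemerédi–Gowers theorem). Let A and B be sets of n integers each and let G be a bipartite graph between A and B with p·n² edges, where p > 0, and suppose the partial sumset A +_G B has size at most K·|A|. Then there is a subset A' of A with |A'| ≥ p·n/4 and |A' − A'| ≤ C · K⁴ · p⁻⁵ · n. -/
open Finset Pointwise

/-! Cauchy–Schwarz on the degrees from `B` finds a vertex `b` whose neighbourhood `X ⊆ A` has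
`|X| ≥ pn/2` and in which few pairs `(a, a')` are bad, i.e. have fewer than `p²n/128` common
neighbours. Discarding the vertices of `X` with many bad partners leaves `A'`, with
`|A'| ≥ 7|X|/8`, such that any `a, a' ∈ A'` have at least `3|X|/4` common good partners `c ∈ X`.
Each path `a - b - c - b' - a'` in the graph gives
`a - a' = (a + b) - (c + b) + (c + b') - (a' + b')` with four terms in `A +_G B`, and distinct
paths give distinct quadruples. So every element of `A' - A'` has at least
`(3pn/8)(p²n/128)²` such representations, while there are only `|A +_G B|⁴ ≤ K⁴n⁴` quadruples. -/

namespace BipartiteGraph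

variable {α β : Type*} [DecidableEq α] [DecidableEq β]

def leftNbhd (A : Finset α) (E : Finset (α × β)) (b : β) : Finset α := {a ∈ A | (a, b) ∈ E}

def codegree (B : Finset β) (E : Finset (α × β)) (a a' : α) : ℕ :=
  #{b ∈ B | (a, b) ∈ E ∧ (a', b) ∈ E}

variable {A : Finset α} {B : Finset β} {E : Finset (α × β)}

lemma codegree_comm (a a' : α) : codegree B E a a' = codegree B E a' a := by
  simp only [codegree, and_comm]

lemma sum_card_leftNbhd (hE : E ⊆ A ×ˢ B) : ∑ b ∈ B, #(leftNbhd A E b) = #E := by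
  calc ∑ b ∈ B, #(leftNbhd A E b) = #{e ∈ A ×ˢ B | e ∈ E} := by
        simp only [leftNbhd, card_filter, sum_product_right]
    _ = #E := by rw [filter_mem_eq_inter, inter_eq_right.2 hE]

lemma sum_card_filter_leftNbhd_product (P : α × α → Prop) [DecidablePred P] :
    ∑ b ∈ B, #{q ∈ leftNbhd A E b ×ˢ leftNbhd A E b | P q}
      = ∑ q ∈ A ×ˢ A with P q, codegree B E q.1 q.2 := by
  simp only [leftNbhd, ← filter_product, filter_filter, codegree, card_filter, sum_filter]
  rw [sum_comm]
  refine sum_congr rfl fun q _ => ?_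
  by_cases h : P q <;> simp [h, and_comm]

lemma sum_card_filter_codegree_lt_le {t : ℝ} (ht : 0 ≤ t) :
    ∑ b ∈ B, (#{q ∈ leftNbhd A E b ×ˢ leftNbhd A E b | (codegree B E q.1 q.2 : ℝ) < t} : ℝ)
      ≤ #A ^ 2 * t := by
  calc _ = ∑ q ∈ A ×ˢ A with (codegree B E q.1 q.2 : ℝ) < t, (codegree B E q.1 q.2 : ℝ) := by
        rw [← Nat.cast_sum, sum_card_filter_leftNbhd_product, Nat.cast_sum]
    _ ≤ #{q ∈ A ×ˢ A | (codegree B E q.1 q.2 : ℝ) < t} • t :=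
        sum_le_card_nsmul _ _ _ fun q hq => (mem_filter.1 hq).2.le
    _ ≤ #(A ×ˢ A) • t := nsmul_le_nsmul_left ht (card_filter_le _ _)
    _ = #A ^ 2 * t := by rw [nsmul_eq_mul, card_product, Nat.cast_mul, sq]

lemma exists_leftNbhd_large_few_bad_pairs {n : ℕ} {p : ℝ} (hA : #A = n) (hB : #B = n)
    (hE : E ⊆ A ×ˢ B) (hEcard : (#E : ℝ) = p * n ^ 2) (hn : 0 < n) :
    ∃ b ∈ B, p * n / 2 ≤ #(leftNbhd A E b) ∧
      64 * #{q ∈ leftNbhd A E b ×ˢ leftNbhd A E b |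
        (codegree B E q.1 q.2 : ℝ) < p ^ 2 * n / 128} ≤ #(leftNbhd A E b) ^ 2 := by
  set deg : β → ℝ := fun b => #(leftNbhd A E b)
  set bad : β → ℝ := fun b =>
    #{q ∈ leftNbhd A E b ×ˢ leftNbhd A E b | (codegree B E q.1 q.2 : ℝ) < p ^ 2 * n / 128}
  have hnR : (0 : ℝ) < n := by exact_mod_cast hn
  have hdeg_sq : p ^ 2 * n ^ 3 ≤ ∑ b ∈ B, deg b ^ 2 := by
    have hsum : ∑ b ∈ B, deg b = p * n ^ 2 := by
      rw [← hEcard, ← sum_card_leftNbhd hE, Nat.cast_sum]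
    have := sq_sum_le_card_mul_sum_sq (s := B) (f := deg)
    rw [hsum, hB] at this
    nlinarith
  have hbad : ∑ b ∈ B, bad b ≤ p ^ 2 * n ^ 3 / 128 := by
    have := sum_card_filter_codegree_lt_le (A := A) (B := B) (E := E)
      (by positivity : 0 ≤ p ^ 2 * n / 128)
    rw [hA] at this
    linear_combination this
  obtain ⟨b, hb, hb_good⟩ : ∃ b ∈ B, p ^ 2 * n ^ 2 / 2 ≤ deg b ^ 2 - 64 * bad b := by
    refine exists_le_of_sum_le (card_pos.1 (hB ▸ hn)) ?_
    rw [sum_const, hB, nsmul_eq_mul, sum_sub_distrib, ← mul_sum]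
    nlinarith
  have hbad_nonneg : 0 ≤ bad b := Nat.cast_nonneg _
  refine ⟨b, hb, ?_, ?_⟩
  · nlinarith [sq_nonneg (p * n - 2 * deg b)]
  · have h : 64 * bad b ≤ deg b ^ 2 := by linarith [sq_nonneg (p * n)]
    simp only [bad, deg] at h
    exact_mod_cast h

end BipartiteGraph

section Pruning

variable {α : Type*} [DecidableEq α]

lemma exists_subset_pairwise_many_common_good {X : Finset α} {r : α → α → Prop}
    [DecidableRel r] (hX : 64 * #{q ∈ X ×ˢ X | r q.1 q.2} ≤ #X ^ 2) :
    ∃ Y ⊆ X, 7 * #X ≤ 8 * #Y ∧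
      ∀ a ∈ Y, ∀ a' ∈ Y, 3 * #X ≤ 4 * #{c ∈ X | ¬ r a c ∧ ¬ r a' c} := by
  set deg : α → ℕ := fun a => #{c ∈ X | r a c}
  have hdeg_sum : ∑ a ∈ X, deg a = #{q ∈ X ×ˢ X | r q.1 q.2} := by
    simp only [deg, card_filter, sum_product]
  have hsplit := card_filter_add_card_filter_not (s := X) (fun a => 8 * deg a ≤ #X)
  have hrest : 8 * #{a ∈ X | ¬ 8 * deg a ≤ #X} ≤ #X := by
    have : #{a ∈ X | ¬ 8 * deg a ≤ #X} * (#X + 1) ≤ 8 * #{q ∈ X ×ˢ X | r q.1 q.2} :=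
      calc #{a ∈ X | ¬ 8 * deg a ≤ #X} * (#X + 1)
          = ∑ _a ∈ X with ¬ 8 * deg _a ≤ #X, (#X + 1) := by rw [sum_const, smul_eq_mul]
        _ ≤ ∑ a ∈ X with ¬ 8 * deg a ≤ #X, 8 * deg a :=
            sum_le_sum fun a ha => by have := (mem_filter.1 ha).2; omega
        _ ≤ ∑ a ∈ X, 8 * deg a := sum_le_sum_of_subset (filter_subset _ _)
        _ = 8 * #{q ∈ X ×ˢ X | r q.1 q.2} := by rw [← mul_sum, hdeg_sum]
    nlinarith
  refine ⟨{a ∈ X | 8 * deg a ≤ #X}, filter_subset _ _, by omega, fun a ha a' ha' => ?_⟩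
  have hgood := card_filter_add_card_filter_not (s := X) (fun c => r a c ∨ r a' c)
  have hbad : #{c ∈ X | r a c ∨ r a' c} ≤ deg a + deg a' := by
    rw [filter_or]
    exact card_union_le _ _
  simp only [not_or] at hgood
  have := (mem_filter.1 ha).2
  have := (mem_filter.1 ha').2
  omega

end Pruning

section AlternatingSums

variable {G : Type*} [AddCommGroup G] [DecidableEq G]

def altSumRepCount (S : Finset G) (d : G) : ℕ :=
  #{q ∈ S ×ˢ S ×ˢ S ×ˢ S | q.1 - q.2.1 + q.2.2.1 - q.2.2.2 = d}

lemma sum_altSumRepCount_le (S D : Finset G) : ∑ d ∈ D, altSumRepCount S d ≤ #S ^ 4 := by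
  simp only [altSumRepCount, sum_card_fiberwise_eq_card_filter]
  exact (card_filter_le _ _).trans_eq (by simp only [card_product]; ring)

lemma card_mul_le_of_le_altSumRepCount {S D : Finset G} {t : ℝ}
    (h : ∀ d ∈ D, t ≤ altSumRepCount S d) : #D * t ≤ #S ^ 4 := by
  rw [← nsmul_eq_mul]
  calc #D • t ≤ ∑ d ∈ D, (altSumRepCount S d : ℝ) := card_nsmul_le_sum _ _ _ h
    _ ≤ #S ^ 4 := by exact_mod_cast sum_altSumRepCount_le S D

end AlternatingSums

namespace BipartiteGraph

variable {A B C : Finset ℤ} {E : Finset (ℤ × ℤ)}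

lemma sum_codegree_mul_le_pathCount (hC : C ⊆ A) (a a' : ℤ) :
    ∑ c ∈ C, codegree B E a c * codegree B E c a' ≤ pathCount A B E a a' := by
  simp only [codegree, ← card_product, ← card_sigma]
  refine card_le_card_of_injOn (fun x => (x.2.1, x.1, x.2.2)) ?_ ?_
  · intro x hx
    simp only [coe_sigma, Set.mem_sigma_iff, coe_product, Set.mem_prod, mem_coe, mem_filter] at hx
    simp only [coe_filter, Set.mem_ofPred_eq, mem_product]
    exact ⟨⟨hx.2.1.1, hC hx.1, hx.2.2.1⟩, hx.2.1.2.1, hx.2.1.2.2, hx.2.2.2⟩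
  · rintro ⟨c, b, b'⟩ - ⟨c', d, d'⟩ - h
    simp only [Prod.mk.injEq] at h
    obtain ⟨rfl, rfl, rfl⟩ := h
    rfl

lemma pathCount_le_altSumRepCount (a a' : ℤ) :
    pathCount A B E a a' ≤ altSumRepCount (partialSumset E) (a - a') := by
  have hmem : ∀ {x y : ℤ}, (x, y) ∈ E → x + y ∈ partialSumset E := fun h => mem_image_of_mem _ h
  refine card_le_card_of_injOn (fun t => (a + t.1, t.2.1 + t.1, t.2.1 + t.2.2, a' + t.2.2)) ?_ ?_
  · intro t ht
    simp only [coe_filter, Set.mem_ofPred_eq, mem_product] at ht ⊢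
    obtain ⟨-, h₁, h₂, h₃, h₄⟩ := ht
    exact ⟨⟨hmem h₁, hmem h₂, hmem h₃, hmem h₄⟩, by ring⟩
  · rintro ⟨b, c, b'⟩ - ⟨d, e, d'⟩ - h
    simp only [Prod.mk.injEq] at h
    simp only [Prod.mk.injEq]
    omega

lemma card_mul_sq_le_altSumRepCount (hC : C ⊆ A) {a a' : ℤ} {t : ℝ} (ht : 0 ≤ t)
    (h : ∀ c ∈ C, t ≤ codegree B E a c ∧ t ≤ codegree B E a' c) :
    #C * t ^ 2 ≤ altSumRepCount (partialSumset E) (a - a') := by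
  rw [← nsmul_eq_mul]
  calc #C • t ^ 2 ≤ ∑ c ∈ C, (codegree B E a c * codegree B E c a' : ℝ) := by
        refine card_nsmul_le_sum _ _ _ fun c hc => ?_
        rw [sq, codegree_comm c a']
        exact mul_le_mul (h c hc).1 (h c hc).2 ht (Nat.cast_nonneg _)
    _ ≤ altSumRepCount (partialSumset E) (a - a') := by
        exact_mod_cast (sum_codegree_mul_le_pathCount hC a a').trans
          (pathCount_le_altSumRepCount a a')

lemma exists_large_subset_le_altSumRepCount {X : Finset ℤ} (hXA : X ⊆ A) {t : ℝ} (ht : 0 ≤ t)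
    (hX : 64 * #{q ∈ X ×ˢ X | (codegree B E q.1 q.2 : ℝ) < t} ≤ #X ^ 2) :
    ∃ A' ⊆ X, 7 * #X ≤ 8 * #A' ∧
      ∀ d ∈ A' - A', 3 * #X / 4 * t ^ 2 ≤ altSumRepCount (partialSumset E) d := by
  obtain ⟨A', hA'X, hA'card, hgood⟩ :=
    exists_subset_pairwise_many_common_good (r := fun a a' => (codegree B E a a' : ℝ) < t) hX
  refine ⟨A', hA'X, hA'card, fun d hd => ?_⟩
  obtain ⟨a, ha, a', ha', rfl⟩ := mem_sub.1 hd
  set good := {c ∈ X | ¬ (codegree B E a c : ℝ) < t ∧ ¬ (codegree B E a' c : ℝ) < t}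
  have hgood_card : 3 * (#X : ℝ) ≤ 4 * #good := by exact_mod_cast hgood a ha a' ha'
  have hgood_codegree : ∀ c ∈ good, t ≤ codegree B E a c ∧ t ≤ codegree B E a' c :=
    fun c hc => by simpa only [not_lt] using (mem_filter.1 hc).2
  calc 3 * #X / 4 * t ^ 2 ≤ #good * t ^ 2 := by gcongr; linarith
    _ ≤ _ := card_mul_sq_le_altSumRepCount ((filter_subset _ _).trans hXA) ht hgood_codegree

end BipartiteGraph

open BipartiteGraph

theorem bsg_variant :
    ∃ C : ℝ, 0 < C ∧
      ∀ (n : ℕ) (A B : Finset ℤ) (E : Finset (ℤ × ℤ)) (p K : ℝ),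
        A.card = n → B.card = n → E ⊆ A ×ˢ B → 0 < p →
        (E.card : ℝ) = p * (n : ℝ) ^ 2 →
        ((partialSumset E).card : ℝ) ≤ K * (A.card : ℝ) →
        ∃ A' ⊆ A, p * n / 4 ≤ (A'.card : ℝ) ∧
          ((A' - A').card : ℝ) ≤ C * K ^ 4 * p ^ (-(5 : ℤ)) * n := by
  refine ⟨2 ^ 17, by norm_num, fun n A B E p K hA hB hE hp hEcard hScard => ?_⟩
  rcases Nat.eq_zero_or_pos n with rfl | hn
  · exact ⟨∅, empty_subset _, by simp, by simp⟩
  obtain ⟨b, -, hXcard, hXbad⟩ := exists_leftNbhd_large_few_bad_pairs hA hB hE hEcard hn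
  obtain ⟨A', hA'X, hA'card, hrep⟩ :=
    exists_large_subset_le_altSumRepCount (filter_subset _ _) (by positivity) hXbad
  have hA'card' : 7 * (#(leftNbhd A E b) : ℝ) ≤ 8 * #A' := by exact_mod_cast hA'card
  refine ⟨A', hA'X.trans (filter_subset _ _), by nlinarith, ?_⟩
  have hbound : (#(A' - A') : ℝ) * (3 * (p * n / 2) / 4 * (p ^ 2 * n / 128) ^ 2) ≤ (K * n) ^ 4 :=
    calc _ ≤ (#(A' - A') : ℝ) * (3 * #(leftNbhd A E b) / 4 * (p ^ 2 * n / 128) ^ 2) := by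
          gcongr
      _ ≤ #(partialSumset E) ^ 4 := card_mul_le_of_le_altSumRepCount hrep
      _ ≤ (K * n) ^ 4 := pow_le_pow_left₀ (Nat.cast_nonneg _) (hA ▸ hScard) 4
  have hD : (#(A' - A') * p ^ 5 : ℝ) * n ^ 3 ≤ 2 ^ 17 * K ^ 4 * n * n ^ 3 := by
    have : 0 ≤ (#(A' - A') * p ^ 5 : ℝ) * n ^ 3 := by positivity
    linear_combination 2 ^ 17 * hbound + 2 * this
  rw [zpow_neg, zpow_ofNat, mul_right_comm, ← div_eq_mul_inv, le_div_iff₀ (by positivity)]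
  exact le_of_mul_le_mul_right hD (by positivity)
end

section
/- There is an absolute constant c > 0 with the following property. If a bipartite graph G = (A, B, E) with |A| = |B| = n has p·n² edges, where p ≥ 30·n^{-1/2}, then there is a subset A' of A of size at least p·n/4 such that every pair of (distinct) vertices in A' is connected by at least c·p⁵·n³ paths of length four in G. -/
open Finset Pointwise

def cod (B : Finset ℤ) (E : Finset (ℤ × ℤ)) (a x : ℤ) : ℕ :=
  (B.filter (fun b => (a, b) ∈ E ∧ (x, b) ∈ E)).card

lemma pathCount_eq (A B : Finset ℤ) (E : Finset (ℤ × ℤ)) (a a' : ℤ) :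
    pathCount A B E a a' = ∑ x ∈ A, cod B E a x * cod B E a' x := by
  unfold pathCount cod
  rw [Finset.card_filter, Finset.sum_product]
  simp only [Finset.sum_product]
  rw [Finset.sum_comm]
  refine Finset.sum_congr rfl (fun x _ => ?_)
  rw [Finset.card_filter, Finset.card_filter, Finset.sum_mul_sum]
  refine Finset.sum_congr rfl (fun b _ => ?_)
  refine Finset.sum_congr rfl (fun b' _ => ?_)
  by_cases h1 : (a, b) ∈ E <;> by_cases h2 : (x, b) ∈ E <;>
    by_cases h3 : (x, b') ∈ E <;> by_cases h4 : (a', b') ∈ E <;> simp [h1, h2, h3, h4]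

lemma prodfilter (s t : Finset ℤ) (P : ℤ → ℤ → Prop) [∀ a b, Decidable (P a b)] :
    ((s ×ˢ t).filter (fun q => P q.1 q.2)).card = ∑ a ∈ s, (t.filter (P a)).card := by
  rw [Finset.card_filter, Finset.sum_product]
  exact Finset.sum_congr rfl (fun a _ => (Finset.card_filter _ _).symm)

lemma card_E_eq (A B : Finset ℤ) (E : Finset (ℤ × ℤ)) (hE : E ⊆ A ×ˢ B) :
    E.card = ∑ b ∈ B, (A.filter (fun a => (a, b) ∈ E)).card := by
  have h : E = (A ×ˢ B).filter (fun e => e ∈ E) := by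
    ext e
    simp only [Finset.mem_filter]
    exact ⟨fun he => ⟨hE he, he⟩, fun h => h.2⟩
  conv_lhs => rw [h]
  rw [Finset.card_filter, Finset.sum_product, Finset.sum_comm]
  exact Finset.sum_congr rfl (fun b _ => (Finset.card_filter _ _).symm)

lemma badsum (A B : Finset ℤ) (E : Finset (ℤ × ℤ)) (P : ℤ → ℤ → Prop)
    [∀ a b, Decidable (P a b)] :
    ∑ b ∈ B, (((A.filter (fun a => (a, b) ∈ E)) ×ˢ (A.filter (fun a => (a, b) ∈ E))).filter
        (fun q => P q.1 q.2)).card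
      = ∑ q ∈ (A ×ˢ A).filter (fun q => P q.1 q.2), cod B E q.1 q.2 := by
  have key : ∀ b, ((A.filter (fun a => (a, b) ∈ E)) ×ˢ (A.filter (fun a => (a, b) ∈ E))).filter
        (fun q => P q.1 q.2)
      = ((A ×ˢ A).filter (fun q => P q.1 q.2)).filter (fun q => (q.1, b) ∈ E ∧ (q.2, b) ∈ E) := by
    intro b
    ext q
    simp only [Finset.mem_filter, Finset.mem_product]
    tauto
  simp only [key, Finset.card_filter]
  rw [Finset.sum_comm]
  refine Finset.sum_congr rfl (fun q _ => ?_)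
  rw [cod, Finset.card_filter]

theorem many_paths_lemma :
    ∃ c : ℝ, 0 < c ∧
      ∀ (n : ℕ) (A B : Finset ℤ) (E : Finset (ℤ × ℤ)) (p : ℝ),
        A.card = n → B.card = n → E ⊆ A ×ˢ B →
        (E.card : ℝ) = p * (n : ℝ) ^ 2 → 30 / Real.sqrt n ≤ p →
        ∃ A' ⊆ A, p * n / 4 ≤ (A'.card : ℝ) ∧
          ∀ a ∈ A', ∀ a' ∈ A', a ≠ a' →
            c * p ^ 5 * (n : ℝ) ^ 3 ≤ (pathCount A B E a a' : ℝ) := by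
  classical
  refine ⟨1/16384, by norm_num, ?_⟩
  intro n A B E p hA hB hE hEcard hp
  rcases Nat.eq_zero_or_pos n with hn | hn
  · subst hn
    exact ⟨∅, Finset.empty_subset _, by simp, by simp⟩
  have hn' : (0:ℝ) < n := by exact_mod_cast hn
  have hp0 : 0 < p := lt_of_lt_of_le (by positivity) hp
  have hpn : 0 < p * n := mul_pos hp0 hn'
  set P : ℤ → ℤ → Prop := fun a x => (cod B E a x : ℝ) < p^2 * n / 64 with hP
  set nb : ℤ → Finset ℤ := fun b => A.filter (fun a => (a, b) ∈ E) with hnb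
  set badIn : ℤ → ℕ := fun b => ((nb b ×ˢ nb b).filter (fun q => P q.1 q.2)).card with hbadIn
  -- total bad count bound
  have hbs : ∑ b ∈ B, (badIn b : ℝ) ≤ p^2 * (n:ℝ)^3 / 64 := by
    have h1 : ∑ b ∈ B, badIn b = ∑ q ∈ (A ×ˢ A).filter (fun q => P q.1 q.2), cod B E q.1 q.2 :=
      badsum A B E P
    have h2 : ∑ q ∈ (A ×ˢ A).filter (fun q => P q.1 q.2), (cod B E q.1 q.2 : ℝ)
        ≤ ((A ×ˢ A).filter (fun q => P q.1 q.2)).card • (p^2 * n / 64) := by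
      refine Finset.sum_le_card_nsmul _ _ _ (fun q hq => ?_)
      exact le_of_lt (Finset.mem_filter.mp hq).2
    have h3 : (((A ×ˢ A).filter (fun q => P q.1 q.2)).card : ℝ) ≤ (n:ℝ)^2 := by
      have := Finset.card_filter_le (A ×ˢ A) (fun q => P q.1 q.2)
      have h4 : (A ×ˢ A).card = n * n := by rw [Finset.card_product, hA]
      have : ((A ×ˢ A).filter (fun q => P q.1 q.2)).card ≤ n * n := h4 ▸ this
      calc (((A ×ˢ A).filter (fun q => P q.1 q.2)).card : ℝ) ≤ ((n*n : ℕ) : ℝ) := by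
              exact_mod_cast this
        _ = (n:ℝ)^2 := by push_cast; ring
    have h5 : ∑ b ∈ B, (badIn b : ℝ) = ∑ q ∈ (A ×ˢ A).filter (fun q => P q.1 q.2),
        (cod B E q.1 q.2 : ℝ) := by
      rw [← Nat.cast_sum, h1, Nat.cast_sum]
    rw [h5]
    calc ∑ q ∈ (A ×ˢ A).filter (fun q => P q.1 q.2), (cod B E q.1 q.2 : ℝ)
        ≤ ((A ×ˢ A).filter (fun q => P q.1 q.2)).card • (p^2 * n / 64) := h2
      _ = (((A ×ˢ A).filter (fun q => P q.1 q.2)).card : ℝ) * (p^2 * n / 64) := by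
          rw [nsmul_eq_mul]
      _ ≤ (n:ℝ)^2 * (p^2 * n / 64) := by
          refine mul_le_mul_of_nonneg_right h3 (by positivity)
      _ = p^2 * (n:ℝ)^3 / 64 := by ring
  have hEsum : ∑ b ∈ B, ((nb b).card : ℝ) = p * (n:ℝ)^2 := by
    rw [← Nat.cast_sum, ← card_E_eq A B E hE, hEcard]
  -- choose a good vertex b
  have hex : ∃ b ∈ B, p * n / 2 ≤ ((nb b).card : ℝ) - (32 / (p * n)) * badIn b := by
    by_contra hcon
    push_neg at hcon
    have hBne : B.Nonempty := Finset.card_pos.mp (hB ▸ hn)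
    have hlt : ∑ b ∈ B, (((nb b).card : ℝ) - (32 / (p * n)) * badIn b)
        < ∑ _b ∈ B, (p * n / 2) := Finset.sum_lt_sum_of_nonempty hBne hcon
    rw [Finset.sum_sub_distrib, hEsum, ← Finset.mul_sum, Finset.sum_const, hB,
      nsmul_eq_mul] at hlt
    have hmul : (32 / (p * n)) * ∑ b ∈ B, (badIn b : ℝ) ≤ p * (n:ℝ)^2 / 2 := by
      have := mul_le_mul_of_nonneg_left hbs (by positivity : (0:ℝ) ≤ 32 / (p * n))
      calc (32 / (p * n)) * ∑ b ∈ B, (badIn b : ℝ)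
          ≤ (32 / (p * n)) * (p^2 * (n:ℝ)^3 / 64) := this
        _ = p * (n:ℝ)^2 / 2 := by field_simp; ring
    nlinarith
  obtain ⟨b, hbB, hgb⟩ := hex
  set A0 : Finset ℤ := nb b with hA0
  have hA0A : A0 ⊆ A := Finset.filter_subset _ _
  have hbi0 : (0:ℝ) ≤ badIn b := Nat.cast_nonneg _
  have hfac : (0:ℝ) ≤ (32 / (p * n)) * badIn b := by positivity
  have hA0card : p * n / 2 ≤ (A0.card : ℝ) := by
    have : ((nb b).card : ℝ) - (32 / (p * n)) * badIn b ≤ ((nb b).card : ℝ) := by linarith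
    linarith
  have hbadInle : (badIn b : ℝ) ≤ (p * n / 32) * A0.card := by
    have h32 : (32 / (p * n)) * badIn b ≤ (A0.card : ℝ) := by
      have : (0:ℝ) ≤ p * n / 2 := le_of_lt (by positivity)
      linarith
    have heq : (badIn b : ℝ) = (p * n / 32) * ((32 / (p * n)) * badIn b) := by
      field_simp
    rw [heq]
    exact mul_le_mul_of_nonneg_left h32 (le_of_lt (by positivity))
  set D : ℤ → ℕ := fun a => (A0.filter (fun x => P a x)).card with hD
  have hDsum : ∑ a ∈ A0, D a = badIn b := (prodfilter A0 A0 P).symm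
  set A' : Finset ℤ := A0.filter (fun a => (D a : ℝ) ≤ p * n / 8) with hA'
  refine ⟨A', (Finset.filter_subset _ _).trans hA0A, ?_, ?_⟩
  · -- size of A'
    set T : Finset ℤ := A0.filter (fun a => ¬ ((D a : ℝ) ≤ p * n / 8)) with hT
    have hTsum : (T.card : ℝ) * (p * n / 8) ≤ ∑ a ∈ T, (D a : ℝ) := by
      have := Finset.card_nsmul_le_sum T (fun a => (D a : ℝ)) (p * n / 8)
        (fun a ha => le_of_lt (lt_of_not_ge (Finset.mem_filter.mp ha).2))
      rwa [nsmul_eq_mul] at this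
    have hTA0 : ∑ a ∈ T, (D a : ℝ) ≤ ∑ a ∈ A0, (D a : ℝ) := by
      refine Finset.sum_le_sum_of_subset_of_nonneg (Finset.filter_subset _ _) ?_
      intros; positivity
    have hA0D : ∑ a ∈ A0, (D a : ℝ) = (badIn b : ℝ) := by
      rw [← Nat.cast_sum, hDsum]
    have hT4 : (T.card : ℝ) ≤ (A0.card : ℝ) / 4 := by
      have h1 : (T.card : ℝ) * (p * n / 8) ≤ (p * n / 32) * A0.card := by
        calc (T.card : ℝ) * (p * n / 8) ≤ ∑ a ∈ T, (D a : ℝ) := hTsum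
          _ ≤ (badIn b : ℝ) := hA0D ▸ hTA0
          _ ≤ (p * n / 32) * A0.card := hbadInle
      nlinarith
    have hsplit : A'.card + T.card = A0.card :=
      Finset.card_filter_add_card_filter_not _
    have : (A'.card : ℝ) + T.card = A0.card := by exact_mod_cast hsplit
    linarith
  · -- every pair has many paths
    intro a ha a' ha' _
    obtain ⟨haA0, haD⟩ := Finset.mem_filter.mp ha
    obtain ⟨ha'A0, ha'D⟩ := Finset.mem_filter.mp ha'
    set S : Finset ℤ := A0.filter (fun x => ¬ P a x ∧ ¬ P a' x) with hS
    have hcompl : (A0.filter (fun x => ¬ (¬ P a x ∧ ¬ P a' x))).card ≤ D a + D a' := by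
      have hsub : A0.filter (fun x => ¬ (¬ P a x ∧ ¬ P a' x))
          ⊆ A0.filter (fun x => P a x) ∪ A0.filter (fun x => P a' x) := by
        intro x hx
        obtain ⟨hx0, hx1⟩ := Finset.mem_filter.mp hx
        by_cases h1 : P a x
        · exact Finset.mem_union_left _ (Finset.mem_filter.mpr ⟨hx0, h1⟩)
        · by_cases h2 : P a' x
          · exact Finset.mem_union_right _ (Finset.mem_filter.mpr ⟨hx0, h2⟩)
          · exact absurd ⟨h1, h2⟩ hx1
      calc (A0.filter (fun x => ¬ (¬ P a x ∧ ¬ P a' x))).card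
          ≤ (A0.filter (fun x => P a x) ∪ A0.filter (fun x => P a' x)).card :=
            Finset.card_le_card hsub
        _ ≤ D a + D a' := Finset.card_union_le _ _
    have hsplit : S.card + (A0.filter (fun x => ¬ (¬ P a x ∧ ¬ P a' x))).card = A0.card :=
      Finset.card_filter_add_card_filter_not _
    have hScard : p * n / 4 ≤ (S.card : ℝ) := by
      have h1 : ((A0.filter (fun x => ¬ (¬ P a x ∧ ¬ P a' x))).card : ℝ) ≤ (D a : ℝ) + D a' := by
        exact_mod_cast hcompl
      have h2 : (S.card : ℝ) + ((A0.filter (fun x => ¬ (¬ P a x ∧ ¬ P a' x))).card : ℝ)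
          = A0.card := by exact_mod_cast hsplit
      linarith
    have hpath : (∑ x ∈ S, cod B E a x * cod B E a' x : ℕ) ≤ pathCount A B E a a' := by
      rw [pathCount_eq]
      exact Finset.sum_le_sum_of_subset ((Finset.filter_subset _ _).trans hA0A)
    have hterm : ∀ x ∈ S, (p^2 * n / 64) * (p^2 * n / 64) ≤ ((cod B E a x * cod B E a' x : ℕ) : ℝ) := by
      intro x hx
      obtain ⟨_, h1, h2⟩ := Finset.mem_filter.mp hx
      push_cast
      exact mul_le_mul (not_lt.1 h1) (not_lt.1 h2) (by positivity) (Nat.cast_nonneg _)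
    have hsum : (S.card : ℝ) * ((p^2 * n / 64) * (p^2 * n / 64))
        ≤ ∑ x ∈ S, ((cod B E a x * cod B E a' x : ℕ) : ℝ) := by
      have := Finset.card_nsmul_le_sum S (fun x => ((cod B E a x * cod B E a' x : ℕ) : ℝ))
        ((p^2 * n / 64) * (p^2 * n / 64)) hterm
      rwa [nsmul_eq_mul] at this
    have hfin : (1/16384 : ℝ) * p^5 * (n:ℝ)^3
        ≤ (S.card : ℝ) * ((p^2 * n / 64) * (p^2 * n / 64)) := by
      have heq : (p * n / 4) * ((p^2 * n / 64) * (p^2 * n / 64))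
          = (1/16384 : ℝ) * p^5 * (n:ℝ)^3 := by ring
      rw [← heq]
      exact mul_le_mul_of_nonneg_right hScard (by positivity)
    have hcast : (∑ x ∈ S, ((cod B E a x * cod B E a' x : ℕ) : ℝ))
        ≤ (pathCount A B E a a' : ℝ) := by
      rw [← Nat.cast_sum]
      exact_mod_cast hpath
    linarith
end

section
/- If a bipartite graph G = (A, B, E) with |A| = |B| = n has p·n² edges with p ≥ 30·n^{-1/2}, then there is a subset A' of A of size at least p·n/4 such that every pair of distinct vertices in A' is connected by at least p⁵·n³/2000 paths of length four in G. -/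
open Finset Pointwise

def Qset (B : Finset ℤ) (E : Finset (ℤ × ℤ)) (x y : ℤ) : Finset ℤ :=
  B.filter (fun b => (x, b) ∈ E ∧ (y, b) ∈ E)

def codN (B : Finset ℤ) (E : Finset (ℤ × ℤ)) (x y : ℤ) : ℕ := (Qset B E x y).card

def NbA (A : Finset ℤ) (E : Finset (ℤ × ℤ)) (b : ℤ) : Finset ℤ :=
  A.filter (fun a => (a, b) ∈ E)

lemma codN_symm (B : Finset ℤ) (E : Finset (ℤ × ℤ)) (x y : ℤ) :
    codN B E x y = codN B E y x := by
  simp only [codN, Qset]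
  congr 1
  ext b
  simp [and_comm]

lemma path_lb (A B : Finset ℤ) (E : Finset (ℤ × ℤ)) (a a' : ℤ) (S : Finset ℤ) (hS : S ⊆ A) :
    ∑ c ∈ S, codN B E a c * codN B E c a' ≤ pathCount A B E a a' := by
  classical
  have hdisj : ∀ c ∈ S, ∀ c' ∈ S, c ≠ c' →
      Disjoint (Qset B E a c ×ˢ ({c} ×ˢ Qset B E c a'))
        (Qset B E a c' ×ˢ ({c'} ×ˢ Qset B E c' a')) := by
    intro c _ c' _ hne
    rw [Finset.disjoint_left]
    rintro ⟨b, c₀, b'⟩ h1 h2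
    simp only [Finset.mem_product, Finset.mem_singleton] at h1 h2
    exact hne (h1.2.1.symm.trans h2.2.1)
  have hcard : (S.biUnion (fun c => Qset B E a c ×ˢ ({c} ×ˢ Qset B E c a'))).card
      = ∑ c ∈ S, codN B E a c * codN B E c a' := by
    rw [Finset.card_biUnion hdisj]
    refine Finset.sum_congr rfl fun c _ => ?_
    simp [codN, Finset.card_product, mul_comm]
  rw [← hcard, pathCount]
  apply Finset.card_le_card
  intro t ht
  simp only [Finset.mem_biUnion] at ht
  obtain ⟨c, hcS, ht⟩ := ht
  obtain ⟨b, c₀, b'⟩ := t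
  simp only [Finset.mem_product, Finset.mem_singleton] at ht
  obtain ⟨hb, hc₀, hb'⟩ := ht
  subst hc₀
  simp only [Qset, Finset.mem_filter] at hb hb'
  simp only [Finset.mem_filter, Finset.mem_product]
  exact ⟨⟨hb.1, hS hcS, hb'.1⟩, hb.2.1, hb.2.2, hb'.2.1, hb'.2.2⟩

lemma sum_deg (A B : Finset ℤ) (E : Finset (ℤ × ℤ)) (hE : E ⊆ A ×ˢ B) :
    ∑ b ∈ B, (NbA A E b).card = E.card := by
  classical
  have h1 : ∀ b, (NbA A E b).card = ∑ a ∈ A, if (a, b) ∈ E then 1 else 0 := fun b => by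
    rw [NbA, Finset.card_filter]
  simp_rw [h1]
  rw [Finset.sum_comm]
  calc ∑ a ∈ A, ∑ b ∈ B, (if (a, b) ∈ E then 1 else 0)
      = ∑ x ∈ A ×ˢ B, (if x ∈ E then 1 else 0) := by
        rw [Finset.sum_product]
    _ = ((A ×ˢ B).filter (· ∈ E)).card := (Finset.card_filter _ _).symm
    _ = E.card := by rw [Finset.filter_mem_eq_inter, Finset.inter_eq_right.mpr hE]

lemma codN_eq_sum (B : Finset ℤ) (E : Finset (ℤ × ℤ)) (x y : ℤ) :
    (codN B E x y : ℕ) = ∑ b ∈ B, if (x, b) ∈ E ∧ (y, b) ∈ E then 1 else 0 := by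
  rw [codN, Qset, Finset.card_filter]

open scoped Classical

noncomputable def lcN (A B : Finset ℤ) (E : Finset (ℤ × ℤ)) (s : ℝ) (b x : ℤ) : ℕ :=
  ((NbA A E b).filter (fun y => (codN B E x y : ℝ) < s)).card

noncomputable def LN (A B : Finset ℤ) (E : Finset (ℤ × ℤ)) (s : ℝ) (b : ℤ) : ℕ :=
  ∑ x ∈ NbA A E b, lcN A B E s b x

lemma LN_sum_le (A B : Finset ℤ) (E : Finset (ℤ × ℤ)) (s : ℝ) (hs : 0 ≤ s) :
    ∑ b ∈ B, (LN A B E s b : ℝ) ≤ (A.card : ℝ)^2 * s := by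
  have key : ∀ b : ℤ, (LN A B E s b : ℝ) = ∑ x ∈ A, ∑ y ∈ A,
      (if (x, b) ∈ E ∧ (y, b) ∈ E then
        (if (codN B E x y : ℝ) < s then (1:ℝ) else 0) else 0) := by
    intro b
    rw [LN]
    push_cast
    rw [NbA, Finset.sum_filter]
    refine Finset.sum_congr rfl fun x _ => ?_
    by_cases hxb : (x, b) ∈ E
    · simp only [hxb, if_true, true_and]
      rw [lcN, Finset.card_filter, NbA, Finset.sum_filter]
      push_cast
      refine Finset.sum_congr rfl fun y _ => ?_
      split_ifs <;> norm_num
    · simp [hxb]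
  calc ∑ b ∈ B, (LN A B E s b : ℝ)
      = ∑ x ∈ A, ∑ y ∈ A, ∑ b ∈ B,
        (if (x, b) ∈ E ∧ (y, b) ∈ E then
          (if (codN B E x y : ℝ) < s then (1:ℝ) else 0) else 0) := by
        simp_rw [key]
        rw [Finset.sum_comm]
        refine Finset.sum_congr rfl fun x _ => ?_
        rw [Finset.sum_comm]
    _ ≤ ∑ x ∈ A, ∑ y ∈ A, s := by
        refine Finset.sum_le_sum fun x _ => Finset.sum_le_sum fun y _ => ?_
        by_cases hlow : (codN B E x y : ℝ) < s
        · have h2 : ((codN B E x y : ℕ) : ℝ)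
              = ∑ b ∈ B, (if (x, b) ∈ E ∧ (y, b) ∈ E then (1:ℝ) else 0) := by
            rw [codN_eq_sum B E x y]; push_cast; rfl
          calc ∑ b ∈ B, (if (x, b) ∈ E ∧ (y, b) ∈ E then
                (if (codN B E x y : ℝ) < s then (1:ℝ) else 0) else 0)
              = (codN B E x y : ℝ) := by simp only [hlow, if_true]; rw [← h2]
            _ ≤ s := hlow.le
        · simp only [hlow, if_false, ite_self, Finset.sum_const_zero]
          exact hs
    _ = (A.card : ℝ)^2 * s := by
        simp [Finset.sum_const, nsmul_eq_mul]
        ring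

set_option maxHeartbeats 1000000 in
theorem many_paths_lemma_explicit
    (n : ℕ) (A B : Finset ℤ) (E : Finset (ℤ × ℤ)) (p : ℝ)
    (hA : A.card = n) (hB : B.card = n) (hE : E ⊆ A ×ˢ B)
    (hcard : (E.card : ℝ) = p * (n : ℝ) ^ 2) (hp : 30 / Real.sqrt n ≤ p) :
    ∃ A' ⊆ A, p * n / 4 ≤ (A'.card : ℝ) ∧
      ∀ a ∈ A', ∀ a' ∈ A', a ≠ a' →
        p ^ 5 * (n : ℝ) ^ 3 / 2000 ≤ (pathCount A B E a a' : ℝ) := by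
  rcases Nat.eq_zero_or_pos n with hn0 | hn
  · subst hn0
    exact ⟨∅, Finset.empty_subset _, by norm_num,
      fun a ha => (Finset.notMem_empty a ha).elim⟩
  have hn1 : (1:ℝ) ≤ (n:ℝ) := by exact_mod_cast hn
  have hnpos : (0:ℝ) < (n:ℝ) := by linarith
  have hppos : (0:ℝ) < p := by
    have h30 : (0:ℝ) < 30 / Real.sqrt n := by
      apply div_pos (by norm_num)
      exact Real.sqrt_pos.mpr hnpos
    linarith
  set s : ℝ := p^2 * n / 20 with hs_def
  have hs0 : (0:ℝ) ≤ s := by rw [hs_def]; positivity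
  -- sum of degrees
  have hdegsum : ∑ b ∈ B, ((NbA A E b).card : ℝ) = p * (n:ℝ)^2 := by
    calc ∑ b ∈ B, ((NbA A E b).card : ℝ)
        = ((∑ b ∈ B, (NbA A E b).card : ℕ) : ℝ) := by push_cast; rfl
      _ = (E.card : ℝ) := by rw [sum_deg A B E hE]
      _ = p * (n:ℝ)^2 := hcard
  -- Cauchy-Schwarz
  have hCS : p^2 * (n:ℝ)^3 ≤ ∑ b ∈ B, ((NbA A E b).card : ℝ)^2 := by
    have h := sq_sum_le_card_mul_sum_sq (s := B) (f := fun b => ((NbA A E b).card : ℝ))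
    rw [hdegsum, hB] at h
    nlinarith [h, hnpos]
  -- sum of L
  have hLsum : ∑ b ∈ B, (LN A B E s b : ℝ) ≤ (n:ℝ)^2 * s := by
    have := LN_sum_le A B E s hs0
    rwa [hA] at this
  -- choose b₀
  have havg : ∑ b ∈ B, (p^2 * (n:ℝ)^2 / 5)
      ≤ ∑ b ∈ B, (((NbA A E b).card : ℝ)^2 - 16 * (LN A B E s b : ℝ)) := by
    rw [Finset.sum_sub_distrib, Finset.sum_const, hB, nsmul_eq_mul, ← Finset.mul_sum]
    have h16 : 16 * ∑ b ∈ B, (LN A B E s b : ℝ) ≤ 16 * ((n:ℝ)^2 * s) := by linarith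
    rw [hs_def] at h16
    nlinarith [hCS]
  have hBne : B.Nonempty := by
    rw [← Finset.card_pos, hB]; exact hn
  obtain ⟨b₀, hb₀B, hb₀⟩ := Finset.exists_le_of_sum_le hBne havg
  set Dn : ℕ := (NbA A E b₀).card with hDn_def
  set D : ℝ := (Dn : ℝ) with hD_def
  set Λ : ℝ := (LN A B E s b₀ : ℝ) with hΛ_def
  have hΛ0 : 0 ≤ Λ := by rw [hΛ_def]; positivity
  have hD2 : p^2 * (n:ℝ)^2 / 5 + 16 * Λ ≤ D^2 := by
    rw [hΛ_def, hD_def, hDn_def]; linarith [hb₀]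
  have hD0 : 0 ≤ D := by rw [hD_def]; positivity
  have hDpos : 0 < D := by nlinarith [hD2, mul_pos (mul_pos hppos hppos) (mul_pos hnpos hnpos)]
  -- the set A'
  set A' : Finset ℤ := (NbA A E b₀).filter (fun a => 4 * lcN A B E s b₀ a ≤ Dn) with hA'_def
  have hA'sub : A' ⊆ A := by
    intro a ha
    exact (Finset.mem_filter.mp (Finset.filter_subset _ _ ha)).1
  refine ⟨A', hA'sub, ?_, ?_⟩
  · -- size bound
    set XS : Finset ℤ := (NbA A E b₀).filter (fun a => ¬ 4 * lcN A B E s b₀ a ≤ Dn) with hXS_def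
    have hsplit : A'.card + XS.card = Dn := by
      rw [hA'_def, hXS_def, hDn_def]
      exact Finset.card_filter_add_card_filter_not _
    have hXD : XS.card * Dn ≤ 4 * LN A B E s b₀ := by
      calc XS.card * Dn = ∑ _x ∈ XS, Dn := by rw [Finset.sum_const, smul_eq_mul]
        _ ≤ ∑ x ∈ XS, 4 * lcN A B E s b₀ x := by
            refine Finset.sum_le_sum fun x hx => ?_
            have := (Finset.mem_filter.mp hx).2
            omega
        _ ≤ ∑ x ∈ NbA A E b₀, 4 * lcN A B E s b₀ x := by
            refine Finset.sum_le_sum_of_subset (Finset.filter_subset _ _)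
        _ = 4 * LN A B E s b₀ := by rw [LN, Finset.mul_sum]
    have hXDr : (XS.card : ℝ) * D ≤ 4 * Λ := by
      rw [hD_def, hΛ_def]; exact_mod_cast hXD
    have hA'card : (A'.card : ℝ) = D - (XS.card : ℝ) := by
      rw [hD_def]
      have : (A'.card : ℝ) + (XS.card : ℝ) = (Dn : ℝ) := by exact_mod_cast hsplit
      linarith
    rw [hA'card]
    have hkey : p * (n:ℝ) * D ≤ 3 * D^2 + p^2 * (n:ℝ)^2 / 5 := by
      nlinarith [sq_nonneg (6*D - p*(n:ℝ))]
    have h5 : p * (n:ℝ) * D ≤ (4 * (D - (XS.card : ℝ))) * D := by nlinarith [hXDr, hD2]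
    have h6 : p * (n:ℝ) ≤ 4 * (D - (XS.card : ℝ)) :=
      le_of_mul_le_mul_right h5 hDpos
    linarith
  · -- pair bound
    intro a ha a' ha' _hne
    have haNb : a ∈ NbA A E b₀ := Finset.filter_subset _ _ ha
    have ha'Nb : a' ∈ NbA A E b₀ := Finset.filter_subset _ _ ha'
    have hca : 4 * lcN A B E s b₀ a ≤ Dn := (Finset.mem_filter.mp ha).2
    have hca' : 4 * lcN A B E s b₀ a' ≤ Dn := (Finset.mem_filter.mp ha').2
    set Ga : Finset ℤ := (NbA A E b₀).filter (fun c => ¬ (codN B E a c : ℝ) < s) with hGa_def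
    set Ga' : Finset ℤ := (NbA A E b₀).filter (fun c => ¬ (codN B E a' c : ℝ) < s) with hGa'_def
    have hGaSplit : lcN A B E s b₀ a + Ga.card = Dn := by
      rw [hGa_def, hDn_def, lcN]
      exact Finset.card_filter_add_card_filter_not _
    have hGa'Split : lcN A B E s b₀ a' + Ga'.card = Dn := by
      rw [hGa'_def, hDn_def, lcN]
      exact Finset.card_filter_add_card_filter_not _
    set G : Finset ℤ := Ga ∩ Ga' with hG_def
    have hGcard : Ga.card + Ga'.card ≤ G.card + Dn := by
      rw [hG_def]
      have h1 := Finset.card_inter_add_card_union Ga Ga'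
      have h2 : (Ga ∪ Ga').card ≤ Dn := by
        rw [hDn_def]
        exact Finset.card_le_card (Finset.union_subset
          (Finset.filter_subset _ _) (Finset.filter_subset _ _))
      omega
    have hG2 : D / 2 ≤ (G.card : ℝ) := by
      have e1 : (lcN A B E s b₀ a : ℝ) + (Ga.card : ℝ) = D := by
        rw [hD_def]; exact_mod_cast hGaSplit
      have e2 : (lcN A B E s b₀ a' : ℝ) + (Ga'.card : ℝ) = D := by
        rw [hD_def]; exact_mod_cast hGa'Split
      have e3 : (Ga.card : ℝ) + (Ga'.card : ℝ) ≤ (G.card : ℝ) + D := by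
        rw [hD_def]; exact_mod_cast hGcard
      have e4 : 4 * (lcN A B E s b₀ a : ℝ) ≤ D := by
        rw [hD_def]; exact_mod_cast hca
      have e5 : 4 * (lcN A B E s b₀ a' : ℝ) ≤ D := by
        rw [hD_def]; exact_mod_cast hca'
      linarith
    have hGsubA : G ⊆ A := by
      intro c hc
      have : c ∈ Ga := (Finset.mem_inter.mp hc).1
      exact (Finset.mem_filter.mp ((Finset.mem_filter.mp this).1)).1
    have hterm : ∀ c ∈ G, s * s ≤ (codN B E a c : ℝ) * (codN B E c a' : ℝ) := by
      intro c hc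
      obtain ⟨hc1, hc2⟩ := Finset.mem_inter.mp hc
      have h1 : s ≤ (codN B E a c : ℝ) := not_lt.mp (Finset.mem_filter.mp hc1).2
      have h2 : s ≤ (codN B E c a' : ℝ) := by
        rw [codN_symm]
        exact not_lt.mp (Finset.mem_filter.mp hc2).2
      exact mul_le_mul h1 h2 hs0 (le_trans hs0 h1)
    have hsum : (G.card : ℝ) * (s * s) ≤ (pathCount A B E a a' : ℝ) := by
      calc (G.card : ℝ) * (s * s) = ∑ _c ∈ G, s * s := by
            rw [Finset.sum_const, nsmul_eq_mul]
        _ ≤ ∑ c ∈ G, (codN B E a c : ℝ) * (codN B E c a' : ℝ) :=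
            Finset.sum_le_sum hterm
        _ = ((∑ c ∈ G, codN B E a c * codN B E c a' : ℕ) : ℝ) := by push_cast; rfl
        _ ≤ (pathCount A B E a a' : ℝ) := by
            exact_mod_cast path_lb A B E a a' G hGsubA
    have hD25 : 2 * p * (n:ℝ) / 5 ≤ D := by
      nlinarith [hD2, hΛ0, hD0, mul_pos hppos hnpos, sq_nonneg (p * (n:ℝ))]
    have hss : (0:ℝ) ≤ s * s := mul_nonneg hs0 hs0
    have h1 : (2 * p * (n:ℝ) / 5) * (s * s) ≤ D * (s * s) :=
      mul_le_mul_of_nonneg_right hD25 hss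
    have h2 : (D / 2) * (s * s) ≤ (G.card : ℝ) * (s * s) :=
      mul_le_mul_of_nonneg_right hG2 hss
    have heq : (2 * p * (n:ℝ) / 5) * (s * s) / 2 = p^5 * (n:ℝ)^3 / 2000 := by
      rw [hs_def]; ring
    linarith
end

section
/- Let s ≥ 3 and N ≥ 2 be integers. The number of pairs (a, D) of integers such that a + (i−1)D ∈ {6(i−1)N + N + 1, …, 6(i−1)N + 2N} for every 1 ≤ i ≤ s is at least (1/s)·binom(N, 2). -/
/-!
Writing `a = 2N - j` and `D = 6N + k`, the `i`-th term is `6(i-1)N + N + (N - j + (i-1)k)`, so the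
pair is good as soon as `0 ≤ j < N` and `(s-1)k ≤ j`. For each `j` there are `⌊j/(s-1)⌋ + 1 > j/s`
choices of `k`, and summing over `j < N` gives at least `binom(N, 2)/s` pairs.
-/

open Finset Pointwise

def blockAPPairs (s N : ℕ) : Set (ℤ × ℤ) :=
  {q | ∀ i : ℕ, 1 ≤ i → i ≤ s →
    6 * ((i : ℤ) - 1) * N + N + 1 ≤ q.1 + ((i : ℤ) - 1) * q.2 ∧
    q.1 + ((i : ℤ) - 1) * q.2 ≤ 6 * ((i : ℤ) - 1) * N + 2 * N}

lemma choose_two_le_mul_sum_div_add_one (N m : ℕ) (hm : 0 < m) :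
    N.choose 2 ≤ (m + 1) * ∑ j ∈ range N, (j / m + 1) :=
  calc N.choose 2 = ∑ j ∈ range N, j := by rw [Nat.choose_two_right, sum_range_id]
    _ ≤ ∑ j ∈ range N, (m + 1) * (j / m + 1) := sum_le_sum fun j _ =>
        (Nat.lt_mul_div_succ j hm).le.trans (Nat.mul_le_mul_right _ m.le_succ)
    _ = (m + 1) * ∑ j ∈ range N, (j / m + 1) := (mul_sum _ _ _).symm

lemma blockAPPairs_subset (s N : ℕ) (hs : 2 ≤ s) :
    blockAPPairs s N ⊆ ↑(Icc ((N : ℤ) + 1) (2 * N) ×ˢ Icc (5 * (N : ℤ) + 1) (7 * N)) := by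
  intro q hq
  have h1 := hq 1 le_rfl (by omega)
  have h2 := hq 2 (by omega) hs
  norm_num at h1 h2
  simp only [coe_product, Set.mem_prod, mem_coe, mem_Icc]
  omega

lemma blockAPPairs_finite (s N : ℕ) (hs : 2 ≤ s) : (blockAPPairs s N).Finite :=
  (finite_toSet _).subset (blockAPPairs_subset s N hs)

lemma mem_blockAPPairs (s N j k : ℕ) (hj : j < N) (hk : k * (s - 1) ≤ j) :
    ((2 * N - j : ℤ), (6 * N + k : ℤ)) ∈ blockAPPairs s N := by
  intro i hi his
  have hk' : ((s : ℤ) - 1) * k ≤ j := by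
    zify [hi.trans his] at hk
    linarith
  have hik : ((i : ℤ) - 1) * k ≤ ((s : ℤ) - 1) * k := by gcongr
  constructor <;> nlinarith

lemma sum_div_add_one_le_ncard_blockAPPairs (s N : ℕ) (hs : 2 ≤ s) :
    ∑ j ∈ range N, (j / (s - 1) + 1) ≤ (blockAPPairs s N).ncard := by
  set S := (range N).sigma fun j => range (j / (s - 1) + 1)
  calc ∑ j ∈ range N, (j / (s - 1) + 1) = (S : Set ((_ : ℕ) × ℕ)).ncard := by
        rw [Set.ncard_coe_finset, card_sigma]
        simp only [card_range]
    _ ≤ (blockAPPairs s N).ncard := by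
      refine Set.ncard_le_ncard_of_injOn (fun p => ((2 * N - p.1 : ℤ), (6 * N + p.2 : ℤ)))
        ?_ ?_ (blockAPPairs_finite s N hs)
      · rintro ⟨j, k⟩ hp
        simp only [S, mem_coe, mem_sigma, mem_range] at hp
        exact mem_blockAPPairs s N j k hp.1 ((Nat.le_div_iff_mul_le (by omega)).1 (by omega))
      · rintro ⟨j, k⟩ - ⟨j', k'⟩ - h
        simp only [Prod.mk.injEq] at h
        obtain rfl : j = j' := by omega
        obtain rfl : k = k' := by omega
        rfl

theorem count_pairs_in_blocks_general (s N : ℕ) (hs : 3 ≤ s) :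
    (1 / (s : ℝ)) * (N.choose 2 : ℝ) ≤
      (Nat.card {q : ℤ × ℤ // ∀ i : ℕ, 1 ≤ i → i ≤ s →
        6 * ((i : ℤ) - 1) * N + N + 1 ≤ q.1 + ((i : ℤ) - 1) * q.2 ∧
        q.1 + ((i : ℤ) - 1) * q.2 ≤ 6 * ((i : ℤ) - 1) * N + 2 * N} : ℝ) := by
  change _ ≤ ((Nat.card (blockAPPairs s N) : ℕ) : ℝ)
  have hcount : N.choose 2 ≤ s * Nat.card (blockAPPairs s N) := by
    obtain ⟨m, rfl⟩ : ∃ m, s = m + 1 := ⟨s - 1, by omega⟩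
    rw [Nat.card_coe_set_eq]
    exact (choose_two_le_mul_sum_div_add_one N m (by omega)).trans
      (Nat.mul_le_mul_left _ (sum_div_add_one_le_ncard_blockAPPairs (m + 1) N (by omega)))
  rw [one_div, inv_mul_le_iff₀ (by positivity)]
  exact_mod_cast hcount

theorem count_pairs_in_blocks (s N : ℕ) (hs : 3 ≤ s) (hN : 2 ≤ N) :
    (1 / (s : ℝ)) * (N.choose 2 : ℝ) ≤
      (Nat.card {q : ℤ × ℤ // ∀ i : ℕ, 1 ≤ i → i ≤ s →
        6 * ((i : ℤ) - 1) * N + N + 1 ≤ q.1 + ((i : ℤ) - 1) * q.2 ∧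
        q.1 + ((i : ℤ) - 1) * q.2 ≤ 6 * ((i : ℤ) - 1) * N + 2 * N} : ℝ) :=
  count_pairs_in_blocks_general s N hs
end
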